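/- arXiv:math/0703802 — 4 statements merged into one kernel-verified Lean document; each statement's English description precedes it below -/
import Mathlib

section
/- Let X and Y be independent nonnegative random variables such that X is regularly varying with index α > 0, i.e. P(X > x) = x^{-α} L(x) for a slowly varying function L, and E[Y^{α+δ}] < ∞ for some δ > 0. Then lim_{x→∞} P(YX > x)/P(X > x) = E[Y^α]. -/
open MeasureTheory ProbabilityTheory Filter Topology

/-- A measurable function `L : (0,∞) → (0,∞)` is slowly varying if
`L (c x) / L x → 1` as `x → ∞` for every `c > 0`. -/
def SlowlyVarying (L : ℝ → ℝ) : Prop :=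
  ∀ c : ℝ, 0 < c → Tendsto (fun x => L (c * x) / L x) atTop (nhds 1)

set_option maxHeartbeats 1600000 in
/-- Breiman's theorem: if `X` is regularly varying with index `α > 0` and `Y` is
independent of `X` with `E[Y^(α+δ)] < ∞`, then `P(YX > x)/P(X > x) → E[Y^α]`. -/
theorem breiman {Ω : Type*} [MeasurableSpace Ω] {P : Measure Ω} [IsProbabilityMeasure P]
    (X Y : Ω → ℝ) (hXm : Measurable X) (hYm : Measurable Y)
    (hindep : IndepFun Y X P)
    (hXpos : ∀ ω, 0 ≤ X ω) (hYpos : ∀ ω, 0 ≤ Y ω)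
    (α : ℝ) (hα : 0 < α) (L : ℝ → ℝ) (hLpos : ∀ x : ℝ, 0 < x → 0 < L x)
    (hL : SlowlyVarying L)
    (htail : ∀ x : ℝ, 0 < x → (P {ω | x < X ω}).toReal = x ^ (-α) * L x)
    (δ : ℝ) (hδ : 0 < δ)
    (hmom : Integrable (fun ω => Y ω ^ (α + δ)) P) :
    Tendsto (fun x => (P {ω | x < Y ω * X ω}).toReal / (P {ω | x < X ω}).toReal)
      atTop (nhds (∫ ω, Y ω ^ α ∂P)) := by
  set F : ℝ → ℝ := fun t => (P {ω | t < X ω}).toReal with hFdef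
  set β : ℝ := α + δ / 2 with hβdef
  have hβpos : 0 < β := by positivity
  have hαβ : α < β := by simp [hβdef]; positivity
  have hβδ : β ≤ α + δ := by rw [hβdef]; linarith
  -- basic properties of F
  have hFanti : Antitone F := by
    intro s t hst
    exact ENNReal.toReal_mono (measure_ne_top P _)
      (measure_mono (fun ω (h : t < X ω) => lt_of_le_of_lt hst h))
  have hFle1 : ∀ t, F t ≤ 1 := fun t => by
    simpa using ENNReal.toReal_mono (by simp) (prob_le_one (μ := P) (s := {ω | t < X ω}))
  have hFnonneg : ∀ t, 0 ≤ F t := fun t => ENNReal.toReal_nonneg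
  have hFpos : ∀ t : ℝ, 0 < t → 0 < F t := by
    intro t ht
    rw [hFdef]; simp only
    rw [htail t ht]
    exact mul_pos (Real.rpow_pos_of_pos ht _) (hLpos t ht)
  -- ratio identity
  have hratio : ∀ x y : ℝ, 0 < x → 0 < y →
      F (x / y) / F x = y ^ α * (L (x / y) / L x) := by
    intro x y hx hy
    have hxy : 0 < x / y := div_pos hx hy
    rw [hFdef]; simp only
    rw [htail _ hxy, htail _ hx]
    rw [Real.rpow_neg hxy.le, Real.div_rpow hx.le hy.le, Real.rpow_neg hx.le]
    have h1 : (x ^ α)⁻¹ ≠ 0 := by positivity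
    have h2 : (y ^ α) ≠ 0 := by positivity
    have h3 : L x ≠ 0 := (hLpos x hx).ne'
    field_simp
  -- pointwise limit of the ratio
  have htend : ∀ y : ℝ, 0 < y →
      Tendsto (fun x => F (x / y) / F x) atTop (nhds (y ^ α)) := by
    intro y hy
    have h1 : Tendsto (fun x => y ^ α * (L (y⁻¹ * x) / L x)) atTop (nhds (y ^ α)) := by
      have := (hL y⁻¹ (inv_pos.mpr hy)).const_mul (y ^ α)
      simpa using this
    refine Tendsto.congr' ?_ h1
    filter_upwards [eventually_gt_atTop 0] with x hx
    rw [hratio x y hx hy, div_eq_inv_mul x y]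
  -- doubling bound
  obtain ⟨x0, hx0one, hdub⟩ : ∃ x0 : ℝ, 1 ≤ x0 ∧ ∀ x, x0 ≤ x → F (x / 2) ≤ 2 ^ β * F x := by
    have h2 : (2:ℝ) ^ α < 2 ^ β := by
      exact Real.rpow_lt_rpow_left_iff (by norm_num) |>.mpr hαβ
    have hev : ∀ᶠ x in atTop, F (x / 2) / F x < 2 ^ β :=
      (htend 2 (by norm_num)).eventually_lt_const h2
    have := (hev.and (eventually_ge_atTop (1:ℝ))).exists_forall_of_atTop
    obtain ⟨x0, hx0⟩ := this
    refine ⟨max x0 1, le_max_right _ _, fun x hx => ?_⟩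
    have hx1 : (1:ℝ) ≤ x := le_trans (le_max_right _ _) hx
    have hxx0 : x0 ≤ x := le_trans (le_max_left _ _) hx
    obtain ⟨h1, _⟩ := hx0 x hxx0
    have hFx : 0 < F x := hFpos x (by linarith)
    calc F (x / 2) = F (x / 2) / F x * F x := by field_simp
    _ ≤ 2 ^ β * F x := by
        apply mul_le_mul_of_nonneg_right h1.le (hFnonneg x)
  have hx0pos : 0 < x0 := lt_of_lt_of_le one_pos hx0one
  -- Potter-type bound by induction
  have hpot : ∀ n : ℕ, ∀ x y : ℝ, 1 ≤ y → y ≤ 2 ^ (n+1) → x0 * y ≤ x →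
      F (x / y) ≤ (2 * y) ^ β * F x := by
    intro n
    induction n with
    | zero =>
      intro x y hy1 hy2 hxy
      have hx : x0 ≤ x := le_trans (le_mul_of_one_le_right hx0pos.le hy1) hxy
      have hxpos : 0 < x := lt_of_lt_of_le hx0pos hx
      have hypos : 0 < y := lt_of_lt_of_le one_pos hy1
      have h1 : F (x / y) ≤ F (x / 2) := by
        apply hFanti
        apply div_le_div_of_nonneg_left hxpos.le hypos (by simpa using hy2)
      have h2 : (2:ℝ) ^ β ≤ (2 * y) ^ β := by
        apply Real.rpow_le_rpow (by norm_num) (by linarith) hβpos.le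
      calc F (x / y) ≤ 2 ^ β * F x := le_trans h1 (hdub x hx)
      _ ≤ (2 * y) ^ β * F x := mul_le_mul_of_nonneg_right h2 (hFnonneg x)
    | succ n ih =>
      intro x y hy1 hy2 hxy
      by_cases hcase : y ≤ 2 ^ (n+1)
      · exact ih x y hy1 hcase hxy
      push_neg at hcase
      have h2n : (2:ℝ) ≤ 2 ^ (n+1) := by
        calc (2:ℝ) = 2 ^ 1 := (pow_one 2).symm
        _ ≤ 2 ^ (n+1) := pow_le_pow_right₀ (by norm_num) (by omega)
      have hy2' : (2:ℝ) ≤ y := le_trans h2n hcase.le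
      have hypos : (0:ℝ) < y := by linarith
      have hx : x0 * 2 ≤ x := le_trans (by nlinarith) hxy
      have hxpos : 0 < x := by nlinarith
      have hpow2 : (2:ℝ) ^ (n+1+1) = 2 ^ (n+1) * 2 := pow_succ 2 (n+1)
      have ihapp : F ((x/2) / (y/2)) ≤ (2 * (y/2)) ^ β * F (x/2) := by
        apply ih (x/2) (y/2) (by linarith) (by linarith) (by linarith)
      have heq : (x/2) / (y/2) = x / y := by
        rw [div_div_div_eq, mul_comm x 2, mul_div_mul_left x y (by norm_num : (2:ℝ) ≠ 0)]
      rw [heq] at ihapp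
      have h3 : (2 * (y/2)) ^ β = y ^ β := by
        rw [show (2:ℝ) * (y/2) = y by ring]
      rw [h3] at ihapp
      have hx0x : x0 ≤ x := by nlinarith
      calc F (x / y) ≤ y ^ β * F (x/2) := ihapp
      _ ≤ y ^ β * (2 ^ β * F x) := by
          apply mul_le_mul_of_nonneg_left (hdub x hx0x) (Real.rpow_nonneg hypos.le _)
      _ = (2 * y) ^ β * F x := by
          rw [Real.mul_rpow (by norm_num) hypos.le]; ring
  have hpot' : ∀ x y : ℝ, 1 ≤ y → x0 * y ≤ x → F (x / y) ≤ (2 * y) ^ β * F x := by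
    intro x y hy1 hxy
    obtain ⟨n, hn⟩ := pow_unbounded_of_one_lt y (by norm_num : (1:ℝ) < 2)
    exact hpot n x y hy1 (le_trans hn.le (pow_le_pow_right₀ (by norm_num) (by omega))) hxy
  -- lower bound on F
  obtain ⟨c, hcpos, hlow⟩ : ∃ c : ℝ, 0 < c ∧ ∀ x, x0 ≤ x → c * x ^ (-β) ≤ F x := by
    refine ⟨F x0 * (x0 / 2) ^ β, mul_pos (hFpos x0 hx0pos) (by positivity), fun x hx => ?_⟩
    have hxpos : 0 < x := lt_of_lt_of_le hx0pos hx
    have h1 : F (x / (x / x0)) ≤ (2 * (x / x0)) ^ β * F x := by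
      apply hpot' x (x / x0) ((one_le_div hx0pos).mpr hx) (by field_simp; exact le_refl _)
    have heq : x / (x / x0) = x0 := by
      rw [div_div_eq_mul_div, mul_comm, mul_div_assoc, div_self hxpos.ne', mul_one]
    rw [heq] at h1
    have h2 : (2 * (x / x0)) ^ β = (2 / x0) ^ β * x ^ β := by
      rw [← Real.mul_rpow (by positivity) hxpos.le]
      congr 1; field_simp
    rw [h2] at h1
    have hinv : (x0 / 2 : ℝ) ^ β * (2 / x0) ^ β = 1 := by
      rw [← Real.mul_rpow (by positivity) (by positivity),
        show (x0/2) * (2/x0) = 1 by field_simp]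
      exact Real.one_rpow β
    have hxβ : (0:ℝ) < x ^ β := Real.rpow_pos_of_pos hxpos _
    rw [Real.rpow_neg hxpos.le]
    have hmul := mul_le_mul_of_nonneg_right h1
      (show (0:ℝ) ≤ (x0/2) ^ β * (x ^ β)⁻¹ by positivity)
    have hL1 : F x0 * ((x0/2) ^ β * (x ^ β)⁻¹) = F x0 * (x0/2) ^ β * (x ^ β)⁻¹ := by ring
    have hR1 : (2/x0) ^ β * x ^ β * F x * ((x0/2) ^ β * (x ^ β)⁻¹) = F x := by
      field_simp
      linear_combination F x * hinv
    rw [hL1, hR1] at hmul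
    exact hmul
  clear_value F β
  -- laws of Y and X
  set μ : Measure ℝ := P.map Y with hμdef
  set ν : Measure ℝ := P.map X with hνdef
  clear_value μ ν
  have hμprob : IsProbabilityMeasure μ := by
    rw [hμdef]; exact Measure.isProbabilityMeasure_map hYm.aemeasurable
  have hνprob : IsProbabilityMeasure ν := by
    rw [hνdef]; exact Measure.isProbabilityMeasure_map hXm.aemeasurable
  have hνIoi : ∀ t : ℝ, ν (Set.Ioi t) = P {ω | t < X ω} := by
    intro t
    rw [hνdef, Measure.map_apply hXm measurableSet_Ioi]
    rfl
  have hνIoi' : ∀ t : ℝ, (ν (Set.Ioi t)).toReal = F t := fun t => by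
    rw [hνIoi t]; simp only [hFdef]
  have hprod : P.map (fun ω => (Y ω, X ω)) = μ.prod ν := by
    rw [hμdef, hνdef]
    exact (indepFun_iff_map_prod_eq_prod_map_map hYm.aemeasurable hXm.aemeasurable).mp hindep
  have hmeasIoi : Measurable fun t : ℝ => ν (Set.Ioi t) := by
    apply Antitone.measurable
    intro s t hst
    exact measure_mono (Set.Ioi_subset_Ioi hst)
  have hkey : ∀ x : ℝ, 0 < x →
      P {ω | x < Y ω * X ω}
        = ∫⁻ y, (Set.Ioi (0:ℝ)).indicator (fun y => ν (Set.Ioi (x / y))) y ∂μ := by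
    intro x hx
    have hsm : MeasurableSet {p : ℝ × ℝ | x < p.1 * p.2} :=
      measurableSet_lt measurable_const (measurable_fst.mul measurable_snd)
    have h1 : P {ω | x < Y ω * X ω} = (μ.prod ν) {p : ℝ × ℝ | x < p.1 * p.2} := by
      rw [← hprod, Measure.map_apply (hYm.prodMk hXm) hsm]
      rfl
    rw [h1, Measure.prod_apply hsm]
    apply lintegral_congr
    intro y
    by_cases hy : 0 < y
    · have hset : (Prod.mk y ⁻¹' {p : ℝ × ℝ | x < p.1 * p.2}) = Set.Ioi (x / y) := by
        ext z
        simp only [Set.mem_preimage, Set.mem_setOf_eq, Set.mem_Ioi]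
        rw [mul_comm y z]
        exact (div_lt_iff₀ hy).symm
      rw [hset, Set.indicator_of_mem (Set.mem_Ioi.mpr hy)]
    · rw [Set.indicator_of_notMem (by simpa using hy)]
      have hsub : (Prod.mk y ⁻¹' {p : ℝ × ℝ | x < p.1 * p.2}) ⊆ Set.Iio 0 := by
        intro z hz
        simp only [Set.mem_preimage, Set.mem_setOf_eq] at hz
        simp only [Set.mem_Iio]
        by_contra hz0
        push_neg at hz0
        have : y * z ≤ 0 := mul_nonpos_of_nonpos_of_nonneg (not_lt.mp hy) hz0
        linarith
      have hν0 : ν (Set.Iio 0) = 0 := by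
        rw [hνdef, Measure.map_apply hXm measurableSet_Iio]
        have : X ⁻¹' Set.Iio 0 = ∅ := by
          ext ω; simp [Set.mem_preimage, not_lt.mpr (hXpos ω)]
        rw [this, measure_empty]
      exact le_antisymm (le_trans (measure_mono hsub) (le_of_eq hν0)) zero_le
  set I : ℝ → ℝ → ℝ := fun x y => (Set.Ioi (0:ℝ)).indicator (fun y => F (x / y)) y with hIdef
  clear_value I
  have hImeas : ∀ x : ℝ, Measurable (I x) := by
    intro x
    rw [hIdef]
    exact (hFanti.measurable.comp (measurable_const.div measurable_id)).indicator
      measurableSet_Ioi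
  have hInonneg : ∀ x y, 0 ≤ I x y := by
    intro x y
    rw [hIdef]
    exact Set.indicator_nonneg (fun y _ => hFnonneg _) y
  have hIle1 : ∀ x y, I x y ≤ 1 := by
    intro x y
    rw [hIdef]; simp only
    by_cases hy : y ∈ Set.Ioi (0:ℝ)
    · rw [Set.indicator_of_mem hy]; exact hFle1 _
    · rw [Set.indicator_of_notMem hy]; norm_num
  have hkeyR : ∀ x : ℝ, 0 < x → (P {ω | x < Y ω * X ω}).toReal = ∫ y, I x y ∂μ := by
    intro x hx
    rw [hkey x hx, ← integral_toReal]
    · apply integral_congr_ae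
      filter_upwards with y
      by_cases hy : y ∈ Set.Ioi (0:ℝ)
      · rw [Set.indicator_of_mem hy, hIdef]
        simp only
        rw [Set.indicator_of_mem hy, hνIoi']
      · rw [Set.indicator_of_notMem hy, hIdef]
        simp only
        rw [Set.indicator_of_notMem hy]
        rfl
    · exact ((hmeasIoi.comp (measurable_const.div measurable_id)).indicator
        measurableSet_Ioi).aemeasurable
    · filter_upwards with y
      by_cases hy : y ∈ Set.Ioi (0:ℝ)
      · rw [Set.indicator_of_mem hy]; exact measure_lt_top ν _
      · rw [Set.indicator_of_notMem hy]; exact ENNReal.zero_lt_top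
  -- a.e. nonnegativity on μ
  have hae : ∀ᵐ y ∂μ, 0 ≤ y := by
    rw [hμdef]
    refine (ae_map_iff hYm.aemeasurable measurableSet_Ici).mpr ?_
    exact Eventually.of_forall hYpos
  -- moment on μ
  have hmomμ : Integrable (fun y : ℝ => y ^ (α + δ)) μ := by
    rw [hμdef, integrable_map_measure
      (Measurable.aestronglyMeasurable (by fun_prop)) hYm.aemeasurable]
    exact hmom
  set M : ℝ := ∫ y, y ^ (α + δ) ∂μ with hMdef
  clear_value M
  have hMnonneg : 0 ≤ M := by
    rw [hMdef]
    apply integral_nonneg_of_ae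
    filter_upwards [hae] with y hy
    positivity
  have hmarkov : ∀ t : ℝ, 0 < t → (μ (Set.Ioi t)).toReal ≤ M / t ^ (α + δ) := by
    intro t ht
    rw [hMdef]
    have h1 := mul_meas_ge_le_integral_of_nonneg
      (f := fun y : ℝ => y ^ (α + δ)) (μ := μ)
      (by filter_upwards [hae] with y hy; positivity) hmomμ (t ^ (α + δ))
    have hsub : Set.Ioi t ⊆ {y : ℝ | t ^ (α + δ) ≤ y ^ (α + δ)} := by
      intro y hy
      exact Real.rpow_le_rpow ht.le (le_of_lt hy) (by positivity)
    have h2 : (μ (Set.Ioi t)).toReal ≤ (μ {y : ℝ | t ^ (α+δ) ≤ y ^ (α+δ)}).toReal :=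
      ENNReal.toReal_mono (measure_ne_top μ _) (measure_mono hsub)
    have htβ : (0:ℝ) < t ^ (α + δ) := Real.rpow_pos_of_pos ht _
    rw [le_div_iff₀ htβ]
    calc (μ (Set.Ioi t)).toReal * t ^ (α+δ)
        ≤ (μ {y : ℝ | t^(α+δ) ≤ y^(α+δ)}).toReal * t^(α+δ) :=
          mul_le_mul_of_nonneg_right h2 htβ.le
    _ = t^(α+δ) * (μ {y : ℝ | t^(α+δ) ≤ y^(α+δ)}).toReal := mul_comm _ _
    _ ≤ ∫ y, y ^ (α + δ) ∂μ := h1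
  -- the normalized integrand
  set φ : ℝ → ℝ → ℝ := fun x y => I x y / F x with hφdef
  clear_value φ
  have hφmeas : ∀ x, Measurable (φ x) := by
    intro x
    rw [hφdef]
    exact (hImeas x).div_const _
  have hφnonneg : ∀ x y, 0 ≤ φ x y := by
    intro x y
    rw [hφdef]
    exact div_nonneg (hInonneg x y) (hFnonneg x)
  have hφbd : ∀ x y, ‖φ x y‖ ≤ 1 / F x := by
    intro x y
    rw [Real.norm_eq_abs, abs_of_nonneg (hφnonneg x y), hφdef]
    simp only
    rcases eq_or_lt_of_le (hFnonneg x) with h | h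
    · rw [← h, div_zero, div_zero]
    · exact (div_le_div_iff_of_pos_right h).mpr (hIle1 x y)
  have hφint : ∀ x, Integrable (φ x) μ := by
    intro x
    apply Integrable.mono' (integrable_const (1 / F x)) (hφmeas x).aestronglyMeasurable
    exact Eventually.of_forall (hφbd x)
  set ψ : ℝ → ℝ → ℝ := fun x y => (Set.Iic (x / x0)).indicator (φ x) y with hψdef
  clear_value ψ
  -- main dominated-convergence term
  have hT1 : Tendsto (fun x => ∫ y, ψ x y ∂μ) atTop (nhds (∫ y, y ^ α ∂μ)) := by
    apply tendsto_integral_filter_of_dominated_convergence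
      (bound := fun y : ℝ => 1 + 2 ^ β * (1 + y ^ (α + δ)))
    · filter_upwards with x
      rw [hψdef]
      exact ((hφmeas x).indicator measurableSet_Iic).aestronglyMeasurable
    · filter_upwards [eventually_ge_atTop (max x0 1)] with x hx
      filter_upwards [hae] with y hy
      have hxx0 : x0 ≤ x := le_trans (le_max_left _ _) hx
      have hx1 : (1:ℝ) ≤ x := le_trans (le_max_right _ _) hx
      have hxpos : (0:ℝ) < x := by linarith
      have hFx : 0 < F x := hFpos x hxpos
      have hyβ : (0:ℝ) ≤ y ^ (α + δ) := Real.rpow_nonneg hy _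
      have h2β : (0:ℝ) < 2 ^ β := Real.rpow_pos_of_pos (by norm_num) _
      have hbd0 : (0:ℝ) ≤ 1 + 2 ^ β * (1 + y ^ (α + δ)) := by positivity
      rw [hψdef]; simp only
      by_cases hmem : y ∈ Set.Iic (x / x0)
      · rw [Set.indicator_of_mem hmem]
        rw [Real.norm_eq_abs, abs_of_nonneg (hφnonneg x y)]
        by_cases hy1 : y ≤ 1
        · have hφ1 : φ x y ≤ 1 := by
            rw [hφdef]; simp only
            rw [div_le_one hFx]
            by_cases hy0 : y ∈ Set.Ioi (0:ℝ)
            · rw [hIdef]; simp only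
              rw [Set.indicator_of_mem hy0]
              apply hFanti
              rw [le_div_iff₀ (Set.mem_Ioi.mp hy0)]
              nlinarith [Set.mem_Ioi.mp hy0]
            · rw [hIdef]; simp only
              rw [Set.indicator_of_notMem hy0]
              exact hFx.le
          have hb : (0:ℝ) ≤ 2 ^ β * (1 + y ^ (α + δ)) :=
            mul_nonneg h2β.le (by linarith)
          linarith
        · push_neg at hy1
          have hy0 : (0:ℝ) < y := by linarith
          have hx0y : x0 * y ≤ x := by
            rw [Set.mem_Iic, le_div_iff₀ hx0pos] at hmem
            linarith [hmem]
          have hpotx := hpot' x y hy1.le hx0y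
          have hIeq : I x y = F (x / y) := by
            rw [hIdef]; simp only
            rw [Set.indicator_of_mem (Set.mem_Ioi.mpr hy0)]
          have hφ2 : φ x y ≤ (2 * y) ^ β := by
            rw [hφdef]; simp only
            rw [hIeq, div_le_iff₀ hFx]
            exact hpotx
          have h2y : (2 * y) ^ β = 2 ^ β * y ^ β :=
            Real.mul_rpow (by norm_num) hy0.le
          have hyββ : y ^ β ≤ y ^ (α + δ) :=
            Real.rpow_le_rpow_of_exponent_le hy1.le hβδ
          have hyb0 : (0:ℝ) ≤ y ^ β := Real.rpow_nonneg hy0.le _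
          have h9 : 2 ^ β * y ^ β ≤ 2 ^ β * y ^ (α + δ) :=
            mul_le_mul_of_nonneg_left hyββ h2β.le
          calc φ x y ≤ (2 * y) ^ β := hφ2
          _ = 2 ^ β * y ^ β := h2y
          _ ≤ 2 ^ β * y ^ (α + δ) := h9
          _ ≤ (1 + 2 ^ β) + 2 ^ β * y ^ (α + δ) := le_add_of_nonneg_left (by positivity)
          _ = 1 + 2 ^ β * (1 + y ^ (α + δ)) := by ring
      · rw [Set.indicator_of_notMem hmem]
        simpa using hbd0
    · apply Integrable.add (integrable_const 1)
      exact ((integrable_const 1).add hmomμ).const_mul _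
    · filter_upwards [hae] with y hy
      rcases eq_or_lt_of_le hy with hy0 | hy0
      · have hψ0 : ∀ x : ℝ, ψ x y = 0 := by
          intro x
          rw [hψdef]; simp only
          by_cases hmem : y ∈ Set.Iic (x / x0)
          · rw [Set.indicator_of_mem hmem, hφdef]
            simp only
            rw [hIdef]; simp only
            rw [Set.indicator_of_notMem (by simp [← hy0]), zero_div]
          · rw [Set.indicator_of_notMem hmem]
        have hyα : y ^ α = 0 := by rw [← hy0]; exact Real.zero_rpow hα.ne'
        rw [hyα]
        exact tendsto_const_nhds.congr (fun x => (hψ0 x).symm)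
      · apply Tendsto.congr' ?_ (htend y hy0)
        filter_upwards [eventually_ge_atTop (max (x0 * y) 1)] with x hx
        have hx0y : x0 * y ≤ x := le_trans (le_max_left _ _) hx
        have hx1 : (1:ℝ) ≤ x := le_trans (le_max_right _ _) hx
        have hxpos : (0:ℝ) < x := by linarith
        have hmem : y ∈ Set.Iic (x / x0) := by
          rw [Set.mem_Iic, le_div_iff₀ hx0pos]
          linarith
        rw [hψdef]; simp only
        rw [Set.indicator_of_mem hmem, hφdef]
        simp only
        rw [hIdef]; simp only
        rw [Set.indicator_of_mem (Set.mem_Ioi.mpr hy0)]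
  -- the remainder term
  set T2 : ℝ → ℝ := fun x => ∫ y in Set.Ioi (x / x0), φ x y ∂μ with hT2def
  set C : ℝ := M * x0 ^ (α + δ) / c with hCdef
  clear_value T2 C
  have hT2 : Tendsto T2 atTop (nhds 0) := by
    have hg0 : Tendsto (fun x : ℝ => C * x ^ (-(δ/2))) atTop (nhds 0) := by
      have := (tendsto_rpow_neg_atTop (by positivity : (0:ℝ) < δ/2)).const_mul C
      simpa using this
    apply squeeze_zero_norm' ?_ hg0
    · filter_upwards [eventually_ge_atTop (max x0 1)] with x hx
      have hxx0 : x0 ≤ x := le_trans (le_max_left _ _) hx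
      have hx1 : (1:ℝ) ≤ x := le_trans (le_max_right _ _) hx
      have hxpos : (0:ℝ) < x := by linarith
      have hFx : 0 < F x := hFpos x hxpos
      have hR : 0 < x / x0 := div_pos hxpos hx0pos
      have hTx : T2 x = ∫ y in Set.Ioi (x / x0), φ x y ∂μ := by rw [hT2def]
      have step1 : ‖T2 x‖ ≤ (1 / F x) * (μ (Set.Ioi (x / x0))).toReal := by
        rw [hTx]
        apply norm_setIntegral_le_of_norm_le_const (measure_lt_top μ _)
          (fun y _ => hφbd x y)
      have step2 : (μ (Set.Ioi (x / x0))).toReal ≤ M / (x / x0) ^ (α + δ) :=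
        hmarkov _ hR
      have step3 : ‖T2 x‖ ≤ (1 / F x) * (M / (x / x0) ^ (α + δ)) :=
        le_trans step1 (mul_le_mul_of_nonneg_left step2 (by positivity))
      have step4 : 1 / F x ≤ x ^ β / c := by
        have h4 : c * x ^ (-β) ≤ F x := hlow x hxx0
        have h5 : (0:ℝ) < c * x ^ (-β) :=
          mul_pos hcpos (Real.rpow_pos_of_pos hxpos _)
        calc 1 / F x ≤ 1 / (c * x ^ (-β)) := one_div_le_one_div_of_le h5 h4
        _ = x ^ β / c := by
            rw [Real.rpow_neg hxpos.le]
            have hxβ : (0:ℝ) < x ^ β := Real.rpow_pos_of_pos hxpos _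
            field_simp
      have step5 : M / (x / x0) ^ (α + δ) = M * x0 ^ (α + δ) * x ^ (-(α + δ)) := by
        rw [Real.div_rpow hxpos.le hx0pos.le, Real.rpow_neg hxpos.le]
        have h7 : (0:ℝ) < x ^ (α + δ) := Real.rpow_pos_of_pos hxpos _
        have h8 : (0:ℝ) < x0 ^ (α + δ) := Real.rpow_pos_of_pos hx0pos _
        field_simp
      have hMR : (0:ℝ) ≤ M / (x / x0) ^ (α + δ) := by positivity
      have step6 : ‖T2 x‖ ≤ (x ^ β / c) * (M * x0 ^ (α + δ) * x ^ (-(α + δ))) := by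
        calc ‖T2 x‖ ≤ (1 / F x) * (M / (x / x0) ^ (α + δ)) := step3
        _ ≤ (x ^ β / c) * (M / (x / x0) ^ (α + δ)) :=
            mul_le_mul_of_nonneg_right step4 hMR
        _ = (x ^ β / c) * (M * x0 ^ (α + δ) * x ^ (-(α + δ))) := by rw [step5]
      have h6 : x ^ β * x ^ (-(α + δ)) = x ^ (-(δ/2)) := by
        rw [← Real.rpow_add hxpos]
        congr 1
        rw [hβdef]; ring
      calc ‖T2 x‖ ≤ (x ^ β / c) * (M * x0 ^ (α + δ) * x ^ (-(α + δ))) := step6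
      _ = C * (x ^ β * x ^ (-(α + δ))) := by rw [hCdef]; ring
      _ = C * x ^ (-(δ/2)) := by rw [h6]
  -- assemble
  have hμint : ∫ y, y ^ α ∂μ = ∫ ω, Y ω ^ α ∂P := by
    rw [hμdef, integral_map hYm.aemeasurable
      (Measurable.aestronglyMeasurable (by fun_prop))]
  have hfinal : Tendsto (fun x => (∫ y, ψ x y ∂μ) + T2 x) atTop
      (nhds (∫ ω, Y ω ^ α ∂P)) := by
    rw [← hμint, ← add_zero (∫ y, y ^ α ∂μ)]
    exact hT1.add hT2
  apply Tendsto.congr' ?_ hfinal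
  filter_upwards [eventually_ge_atTop (max x0 1)] with x hx
  have hxx0 : x0 ≤ x := le_trans (le_max_left _ _) hx
  have hx1 : (1:ℝ) ≤ x := le_trans (le_max_right _ _) hx
  have hxpos : (0:ℝ) < x := by linarith
  have hFx' : (P {ω | x < X ω}).toReal = F x := by rw [hFdef]
  rw [hFx', hkeyR x hxpos]
  have hdivint : (∫ y, I x y ∂μ) / F x = ∫ y, φ x y ∂μ := by
    rw [hφdef]
    simp only
    rw [integral_div]
  rw [hdivint]
  have hsplit : (∫ y in Set.Iic (x/x0), φ x y ∂μ) + ∫ y in Set.Ioi (x/x0), φ x y ∂μ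
      = ∫ y, φ x y ∂μ := by
    rw [← Set.compl_Iic]
    exact integral_add_compl measurableSet_Iic (hφint x)
  rw [← hsplit, hT2def]
  congr 1
  rw [hψdef]
  simp only
  rw [integral_indicator measurableSet_Iic]
end

section
/- Let (Z_k) be an i.i.d. sequence of nonnegative random variables, N an ℕ-valued random variable, and (Y_k) a sequence of nonnegative random variables. Suppose (𝓕_k) is a filtration such that Y_k is 𝓕_k-measurable, Z_k is 𝓕_{k+1}-measurable and independent of σ(𝓕_k, N). Let (Z̃_k) be an i.i.d. copy of (Z_k) independent of ((Y_k), N) (possibly on an extended probability space). Then for every x > 0, P(∑_{k=1}^N Y_k Z_k > x) ≤ 2 P(N · max_{1≤k≤N} Y_k Z̃_k > x). -/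
open MeasureTheory ProbabilityTheory Filter Topology Set
open scoped ENNReal NNReal

namespace RSMIAux

variable {Ω : Type*} [MeasurableSpace Ω]

/-- Outer-measure additivity across a disjoint measurable "frame". -/
lemma tsum_le_measure_iUnion (P : Measure Ω) (T U : ℕ → Set Ω)
    (hT : ∀ m, MeasurableSet (T m)) (hd : Pairwise (Function.onFun Disjoint T))
    (hU : ∀ m, U m ⊆ T m) : ∑' m, P (U m) ≤ P (⋃ m, U m) := by
  set V := toMeasurable P (⋃ m, U m) with hV
  have hVm : MeasurableSet V := measurableSet_toMeasurable _ _
  have h1 : ∀ m, P (U m) ≤ P (V ∩ T m) := fun m =>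
    measure_mono (subset_inter ((subset_iUnion U m).trans (subset_toMeasurable _ _)) (hU m))
  calc ∑' m, P (U m) ≤ ∑' m, P (V ∩ T m) := ENNReal.tsum_le_tsum h1
    _ = P (⋃ m, V ∩ T m) := (measure_iUnion
          (fun i j hij => Disjoint.mono inter_subset_right inter_subset_right (hd hij))
          (fun m => hVm.inter (hT m))).symm
    _ ≤ P V := measure_mono (iUnion_subset fun m => inter_subset_left)
    _ = P (⋃ m, U m) := measure_toMeasurable _

/-- Factorization of the joint law from a product formula on rectangles. -/
lemma map_pair_eq {β γ : Type*} [MeasurableSpace β] [MeasurableSpace γ]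
    (μ : Measure Ω) [IsFiniteMeasure μ] {W : Ω → β} {X : Ω → γ}
    (hW : Measurable W) (hX : Measurable X)
    (ν : Measure γ) [IsProbabilityMeasure ν]
    (hfac : ∀ (B : Set β) (A : Set γ), MeasurableSet B → MeasurableSet A →
      μ (W ⁻¹' B ∩ X ⁻¹' A) = μ (W ⁻¹' B) * ν A) :
    (Measure.map W μ).prod ν = Measure.map (fun ω => (W ω, X ω)) μ := by
  haveI : IsFiniteMeasure (Measure.map W μ) := Measure.isFiniteMeasure_map μ W
  refine Measure.prod_eq fun B A hB hA => ?_
  rw [Measure.map_apply (hW.prodMk hX) (hB.prod hA)]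
  have hpre : (fun ω => (W ω, X ω)) ⁻¹' (B ×ˢ A) = W ⁻¹' B ∩ X ⁻¹' A := by
    ext ω; simp [Set.mem_prod]
  rw [hpre, hfac B A hB hA, Measure.map_apply hW hB]

/-- Conditional-independence transfer: integrate out `X` using `ν`. -/
lemma lintegral_transfer {β γ : Type*} [MeasurableSpace β] [MeasurableSpace γ]
    (μ : Measure Ω) [IsFiniteMeasure μ] {W : Ω → β} {X : Ω → γ}
    (hW : Measurable W) (hX : Measurable X)
    (ν : Measure γ) [IsProbabilityMeasure ν]
    (hfac : ∀ (B : Set β) (A : Set γ), MeasurableSet B → MeasurableSet A →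
      μ (W ⁻¹' B ∩ X ⁻¹' A) = μ (W ⁻¹' B) * ν A)
    (f : β → γ → ℝ≥0∞) (hf : Measurable (Function.uncurry f)) :
    ∫⁻ ω, f (W ω) (X ω) ∂μ = ∫⁻ ω, ∫⁻ a, f (W ω) a ∂ν ∂μ := by
  haveI : IsFiniteMeasure (Measure.map W μ) := Measure.isFiniteMeasure_map μ W
  have h1 : ∫⁻ ω, f (W ω) (X ω) ∂μ
      = ∫⁻ (p : β × γ), Function.uncurry f p ∂(Measure.map (fun ω => (W ω, X ω)) μ) :=
    (lintegral_map hf (hW.prodMk hX)).symm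
  rw [h1, ← map_pair_eq μ hW hX ν hfac, lintegral_prod _ hf.aemeasurable]
  exact lintegral_map (Measurable.lintegral_prod_right hf) hW

/-- The two-measure (paired) monotonicity step. -/
lemma paired_step {μ' μ : Measure Ω} (hle : μ' ≤ μ) {u v : Ω → ℝ≥0∞}
    (hu : Measurable u) (huv : ∀ ω, u ω ≤ v ω) (hfin : (∫⁻ ω, v ω ∂μ) ≠ ∞) :
    (∫⁻ ω, u ω ∂μ).toReal + (∫⁻ ω, v ω ∂μ').toReal
      ≤ (∫⁻ ω, v ω ∂μ).toReal + (∫⁻ ω, u ω ∂μ').toReal := by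
  have hvrw : ∀ ρ : Measure Ω, ∫⁻ ω, v ω ∂ρ = ∫⁻ ω, u ω ∂ρ + ∫⁻ ω, (v ω - u ω) ∂ρ := by
    intro ρ
    rw [← lintegral_add_left hu]
    exact lintegral_congr fun ω => (add_tsub_cancel_of_le (huv ω)).symm
  have hmono' : ∀ h : Ω → ℝ≥0∞, ∫⁻ ω, h ω ∂μ' ≤ ∫⁻ ω, h ω ∂μ :=
    fun h => lintegral_mono' hle le_rfl
  have hufin : ∫⁻ ω, u ω ∂μ ≠ ∞ := (lt_of_le_of_lt (lintegral_mono huv) hfin.lt_top).ne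
  have hdfin : ∫⁻ ω, (v ω - u ω) ∂μ ≠ ∞ := by
    refine (lt_of_le_of_lt (lintegral_mono fun ω => tsub_le_self) hfin.lt_top).ne
  have hufin' : ∫⁻ ω, u ω ∂μ' ≠ ∞ := (lt_of_le_of_lt (hmono' u) hufin.lt_top).ne
  have hdfin' : ∫⁻ ω, (v ω - u ω) ∂μ' ≠ ∞ := (lt_of_le_of_lt (hmono' _) hdfin.lt_top).ne
  have e1 : (∫⁻ ω, v ω ∂μ).toReal
      = (∫⁻ ω, u ω ∂μ).toReal + (∫⁻ ω, (v ω - u ω) ∂μ).toReal := by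
    rw [hvrw μ, ENNReal.toReal_add hufin hdfin]
  have e2 : (∫⁻ ω, v ω ∂μ').toReal
      = (∫⁻ ω, u ω ∂μ').toReal + (∫⁻ ω, (v ω - u ω) ∂μ').toReal := by
    rw [hvrw μ', ENNReal.toReal_add hufin' hdfin']
  have e3 : (∫⁻ ω, (v ω - u ω) ∂μ').toReal ≤ (∫⁻ ω, (v ω - u ω) ∂μ).toReal :=
    ENNReal.toReal_mono hdfin (hmono' _)
  linarith



/-- Tail function of `μ0`: probability that `c * z` exceeds `x / n`. -/
noncomputable def tl (μ0 : Measure ℝ) (x : ℝ) (n : ℕ) (c : ℝ) : ℝ≥0∞ :=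
  μ0 {z | 0 ≤ z ∧ x < (n : ℝ) * (c * z)}

/-- Product of conditional survival probabilities. -/
noncomputable def qq (μ0 : Measure ℝ) (x : ℝ) (n : ℕ) (Y : ℕ → Ω → ℝ) (k : ℕ) (ω : Ω) :
    ℝ≥0∞ :=
  ∏ j ∈ Finset.Icc 1 k, (1 - tl μ0 x n (Y j ω))

/-- No exceedance among the first `k` indices (with multiplier `n`). -/
def GS (Y Z : ℕ → Ω → ℝ) (x : ℝ) (n k : ℕ) : Set Ω :=
  {ω | ∀ j ∈ Finset.Icc 1 k, (n : ℝ) * (Y j ω * Z j ω) ≤ x}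

/-- The random sum exceeds `x`. -/
def SSum (Y Z : ℕ → Ω → ℝ) (x : ℝ) (n : ℕ) : Set Ω :=
  {ω | x < ∑ k ∈ Finset.Icc 1 n, Y k ω * Z k ω}

section basic

variable (μ0 : Measure ℝ) (x : ℝ) (n : ℕ)

lemma tl_mono : Monotone (tl μ0 x n) := by
  intro c c' hcc
  refine measure_mono fun z hz => ⟨hz.1, lt_of_lt_of_le hz.2 ?_⟩
  exact mul_le_mul_of_nonneg_left (mul_le_mul_of_nonneg_right hcc hz.1) (Nat.cast_nonneg n)

lemma tl_measurable : Measurable (tl μ0 x n) := (tl_mono μ0 x n).measurable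

lemma tl_le_one [IsProbabilityMeasure μ0] (c : ℝ) : tl μ0 x n c ≤ 1 :=
  prob_le_one

lemma tl_eq (hμ0 : μ0 {z | z < 0} = 0) (c : ℝ) :
    μ0 {z | x < (n : ℝ) * (c * z)} = tl μ0 x n c := by
  refine le_antisymm ?_ (measure_mono fun z hz => hz.2)
  calc μ0 {z | x < (n : ℝ) * (c * z)}
      ≤ μ0 ({z | 0 ≤ z ∧ x < (n : ℝ) * (c * z)} ∪ {z | z < 0}) := by
        refine measure_mono fun z hz => ?_
        rcases le_or_gt 0 z with h | h
        · exact Or.inl ⟨h, hz⟩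
        · exact Or.inr h
    _ ≤ tl μ0 x n c + μ0 {z | z < 0} := measure_union_le _ _
    _ = tl μ0 x n c := by rw [hμ0, add_zero]

lemma tl_compl [IsProbabilityMeasure μ0] (hμ0 : μ0 {z | z < 0} = 0) (c : ℝ) :
    μ0 {z | (n : ℝ) * (c * z) ≤ x} = 1 - tl μ0 x n c := by
  have hms : MeasurableSet {z : ℝ | x < (n : ℝ) * (c * z)} :=
    measurableSet_lt measurable_const (measurable_const.mul (measurable_const.mul measurable_id))
  have h1 : {z : ℝ | (n : ℝ) * (c * z) ≤ x} = {z | x < (n : ℝ) * (c * z)}ᶜ := by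
    ext z; simp [not_lt]
  rw [h1, prob_compl_eq_one_sub hms, tl_eq μ0 x n hμ0 c]

lemma qq_le_one (Y : ℕ → Ω → ℝ) (k : ℕ) (ω : Ω) : qq μ0 x n Y k ω ≤ 1 :=
  Finset.prod_le_one (fun _ _ => zero_le) (fun _ _ => tsub_le_self)

lemma qq_succ (Y : ℕ → Ω → ℝ) (k : ℕ) (ω : Ω) :
    qq μ0 x n Y (k + 1) ω = qq μ0 x n Y k ω * (1 - tl μ0 x n (Y (k + 1) ω)) := by
  unfold qq
  rw [Finset.prod_Icc_succ_top (Nat.le_add_left 1 k)]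

lemma qq_zero (Y : ℕ → Ω → ℝ) (ω : Ω) : qq μ0 x n Y 0 ω = 1 := by
  unfold qq; simp

lemma GS_zero (Y Z : ℕ → Ω → ℝ) : GS Y Z x n 0 = (univ : Set Ω) := by
  ext ω; simp [GS]

lemma GS_succ (Y Z : ℕ → Ω → ℝ) (k : ℕ) :
    GS Y Z x n (k + 1)
      = GS Y Z x n k ∩ {ω | (n : ℝ) * (Y (k + 1) ω * Z (k + 1) ω) ≤ x} := by
  ext ω
  simp only [GS, mem_setOf_eq, mem_inter_iff, Finset.mem_Icc]
  constructor
  · intro h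
    exact ⟨fun j hj => h j ⟨hj.1, hj.2.trans (Nat.le_succ k)⟩, h (k + 1) ⟨Nat.succ_le_succ (Nat.zero_le k), le_rfl⟩⟩
  · rintro ⟨h1, h2⟩ j hj
    rcases Nat.lt_or_ge j (k + 1) with h | h
    · exact h1 j ⟨hj.1, Nat.lt_succ_iff.mp h⟩
    · have : j = k + 1 := le_antisymm hj.2 h
      subst this; exact h2

lemma SSum_zero (Y Z : ℕ → Ω → ℝ) (hx : 0 < x) : SSum Y Z x 0 = (∅ : Set Ω) := by
  ext ω; simp [SSum]; linarith

lemma SSum_subset_GS_compl (Y Z : ℕ → Ω → ℝ) (hx : 0 < x) :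
    SSum Y Z x n ⊆ (GS Y Z x n n)ᶜ := by
  intro ω hω hG
  rcases Nat.eq_zero_or_pos n with h0 | hpos
  · subst h0
    simp only [SSum, mem_setOf_eq] at hω
    simp at hω
    linarith
  · have hb : ∀ j ∈ Finset.Icc 1 n, Y j ω * Z j ω ≤ x / (n : ℝ) := by
      intro j hj
      have h := hG j hj
      rw [le_div_iff₀ (by exact_mod_cast hpos)]
      linarith [h, mul_comm ((n : ℝ)) (Y j ω * Z j ω)]
    have hsum := Finset.sum_le_card_nsmul (Finset.Icc 1 n) (fun j => Y j ω * Z j ω)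
      (x / (n : ℝ)) hb
    rw [Nat.card_Icc] at hsum
    simp only [Nat.add_sub_cancel, nsmul_eq_mul] at hsum
    have hnx : (n : ℝ) * (x / (n : ℝ)) = x := by
      field_simp
    rw [hnx] at hsum
    simp only [SSum, mem_setOf_eq] at hω
    linarith

lemma SSum_mono (Y Z : ℕ → Ω → ℝ) (hY : ∀ k ω, 0 ≤ Y k ω) (hZ : ∀ k ω, 0 ≤ Z k ω)
    (m : ℕ) : SSum Y Z x m ⊆ SSum Y Z x (m + 1) := by
  intro ω hω
  simp only [SSum, mem_setOf_eq] at hω ⊢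
  refine lt_of_lt_of_le hω (Finset.sum_le_sum_of_subset_of_nonneg ?_ ?_)
  · exact Finset.Icc_subset_Icc le_rfl (Nat.le_succ m)
  · intro j _ _; exact mul_nonneg (hY j ω) (hZ j ω)

end basic



section peel

variable (P : Measure Ω) [IsProbabilityMeasure P]

/-- Peeling one `Z i` out of an integral against an `F i`-measurable weight. -/
lemma peel (F : ℕ → MeasurableSpace Ω) (hFle : ∀ k, F k ≤ ‹MeasurableSpace Ω›)
    (Y Z : ℕ → Ω → ℝ) (hZm : ∀ k, Measurable (Z k))
    (μ0 : Measure ℝ) [IsProbabilityMeasure μ0] (hμ0 : μ0 {z | z < 0} = 0)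
    (x : ℝ) (n : ℕ) (S : Set Ω) (i : ℕ)
    (hfac : ∀ (C : Set Ω), MeasurableSet[F i] C → ∀ A : Set ℝ, MeasurableSet A →
      P ((Z i) ⁻¹' A ∩ (C ∩ S)) = μ0 A * P (C ∩ S))
    (hYi : Measurable[F i] (Y i)) (φ : Ω → ℝ≥0∞) (hφ : Measurable[F i] φ) :
    ∫⁻ ω, φ ω * (if x < (n : ℝ) * (Y i ω * Z i ω) then 1 else 0) ∂(P.restrict S)
      = ∫⁻ ω, φ ω * tl μ0 x n (Y i ω) ∂(P.restrict S) := by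
  classical
  set W : Ω → ℝ≥0∞ × ℝ := fun ω => (φ ω, Y i ω) with hW
  have hWF : Measurable[F i] W := Measurable.prodMk hφ hYi
  have hWamb : Measurable W := hWF.mono (hFle i) le_rfl
  have hXamb : Measurable (Z i) := hZm i
  set f : ℝ≥0∞ × ℝ → ℝ → ℝ≥0∞ :=
    fun w z => w.1 * (if x < (n : ℝ) * (w.2 * z) then 1 else 0) with hf
  have hfm : Measurable (Function.uncurry f) := by
    have hset : MeasurableSet {p : (ℝ≥0∞ × ℝ) × ℝ | x < (n : ℝ) * (p.1.2 * p.2)} :=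
      measurableSet_lt measurable_const
        (measurable_const.mul ((measurable_fst.snd).mul measurable_snd))
    exact (measurable_fst.fst).mul (Measurable.ite hset measurable_const measurable_const)
  have hfacμ : ∀ (B : Set (ℝ≥0∞ × ℝ)) (A : Set ℝ), MeasurableSet B → MeasurableSet A →
      (P.restrict S) (W ⁻¹' B ∩ (Z i) ⁻¹' A)
        = (P.restrict S) (W ⁻¹' B) * μ0 A := by
    intro B A hB hA
    rw [Measure.restrict_apply ((hWamb hB).inter (hXamb hA)),
      Measure.restrict_apply (hWamb hB)]
    have hre : W ⁻¹' B ∩ (Z i) ⁻¹' A ∩ S = (Z i) ⁻¹' A ∩ ((W ⁻¹' B) ∩ S) := by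
      ext ω; simp only [mem_inter_iff, mem_preimage]; tauto
    rw [hre, hfac (W ⁻¹' B) (hWF hB) A hA, mul_comm]
  have htr := lintegral_transfer (P.restrict S) hWamb hXamb μ0 hfacμ f hfm
  have hLHS : ∀ ω, f (W ω) (Z i ω) = φ ω * (if x < (n : ℝ) * (Y i ω * Z i ω) then 1 else 0) := by
    intro ω; rfl
  have hinner : ∀ ω, (∫⁻ a, f (W ω) a ∂μ0) = φ ω * tl μ0 x n (Y i ω) := by
    intro ω
    have : ∀ a : ℝ, f (W ω) a
        = φ ω * ({z : ℝ | x < (n : ℝ) * (Y i ω * z)}.indicator (1 : ℝ → ℝ≥0∞) a) := by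
      intro a; simp [hf, hW, Set.indicator_apply, mem_setOf_eq]
    have hms' : MeasurableSet {z : ℝ | x < (n : ℝ) * (Y i ω * z)} :=
      measurableSet_lt measurable_const (measurable_const.mul (measurable_const.mul measurable_id))
    rw [lintegral_congr this, lintegral_const_mul _ (measurable_one.indicator hms'),
      lintegral_indicator_one hms', tl_eq μ0 x n hμ0 (Y i ω)]
  calc ∫⁻ ω, φ ω * (if x < (n : ℝ) * (Y i ω * Z i ω) then 1 else 0) ∂(P.restrict S)
      = ∫⁻ ω, f (W ω) (Z i ω) ∂(P.restrict S) := lintegral_congr fun ω => (hLHS ω).symm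
    _ = ∫⁻ ω, ∫⁻ a, f (W ω) a ∂μ0 ∂(P.restrict S) := htr
    _ = ∫⁻ ω, φ ω * tl μ0 x n (Y i ω) ∂(P.restrict S) := lintegral_congr hinner

end peel

section measurability

lemma GS_measurable (Y Z : ℕ → Ω → ℝ) (hY : ∀ k, Measurable (Y k))
    (hZ : ∀ k, Measurable (Z k)) (x : ℝ) (n k : ℕ) :
    MeasurableSet (GS Y Z x n k) := by
  have h : GS Y Z x n k = ⋂ j ∈ Finset.Icc 1 k, {ω | (n : ℝ) * (Y j ω * Z j ω) ≤ x} := by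
    ext ω; simp [GS]
  rw [h]
  exact MeasurableSet.biInter (Finset.Icc 1 k).countable_toSet fun j _ =>
    measurableSet_le (measurable_const.mul ((hY j).mul (hZ j))) measurable_const

lemma SSum_measurable (Y Z : ℕ → Ω → ℝ) (hY : ∀ k, Measurable (Y k))
    (hZ : ∀ k, Measurable (Z k)) (x : ℝ) (n : ℕ) :
    MeasurableSet (SSum Y Z x n) :=
  measurableSet_lt measurable_const (Finset.measurable_sum _ fun j _ => (hY j).mul (hZ j))

lemma GS_measurableF (F : ℕ → MeasurableSpace Ω) (hFmono : Monotone F)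
    (Y Z : ℕ → Ω → ℝ) (hY : ∀ k, Measurable[F k] (Y k))
    (hZF : ∀ k, Measurable[F (k + 1)] (Z k)) (x : ℝ) (n k : ℕ) :
    MeasurableSet[F (k + 1)] (GS Y Z x n k) := by
  have h : GS Y Z x n k = ⋂ j ∈ Finset.Icc 1 k, {ω | (n : ℝ) * (Y j ω * Z j ω) ≤ x} := by
    ext ω; simp [GS]
  rw [h]
  refine MeasurableSet.biInter (Finset.Icc 1 k).countable_toSet fun j hj => ?_
  have hjk : j ≤ k := (Finset.mem_Icc.mp hj).2
  have hYj : Measurable[F (k + 1)] (Y j) := (hY j).mono (hFmono (hjk.trans (Nat.le_succ k))) le_rfl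
  have hZj : Measurable[F (k + 1)] (Z j) := (hZF j).mono (hFmono (Nat.succ_le_succ hjk)) le_rfl
  exact measurableSet_le (measurable_const.mul (hYj.mul hZj)) measurable_const

lemma qq_measurableF (F : ℕ → MeasurableSpace Ω) (hFmono : Monotone F)
    (Y : ℕ → Ω → ℝ) (hY : ∀ k, Measurable[F k] (Y k))
    (μ0 : Measure ℝ) (x : ℝ) (n k : ℕ) :
    Measurable[F k] (qq μ0 x n Y k) := by
  refine Finset.measurable_prod _ fun j hj => ?_
  have hjk : j ≤ k := (Finset.mem_Icc.mp hj).2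
  have hYj : Measurable[F k] (Y j) := (hY j).mono (hFmono hjk) le_rfl
  exact measurable_const.sub ((tl_measurable μ0 x n).comp hYj)

lemma qq_measurable (Y : ℕ → Ω → ℝ) (hY : ∀ k, Measurable (Y k))
    (μ0 : Measure ℝ) (x : ℝ) (n k : ℕ) :
    Measurable (qq μ0 x n Y k) := by
  refine Finset.measurable_prod _ fun j hj => ?_
  exact measurable_const.sub ((tl_measurable μ0 x n).comp (hY j))

end measurability

section zblock

/-- Integrating out the whole independent block `Z''`. -/
lemma zblock (P : Measure Ω) [IsProbabilityMeasure P]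
    (Y : ℕ → Ω → ℝ) (hYm : ∀ k, Measurable (Y k))
    (Z'' : ℕ → Ω → ℝ) (hZ''m : Measurable (fun ω (k : ℕ) => Z'' k ω))
    (μ0 : Measure ℝ) [IsProbabilityMeasure μ0]
    (x : ℝ) (n : ℕ) (S : Set Ω)
    (hfac : ∀ (B : Set (ℕ → ℝ)) (A : Set (ℕ → ℝ)), MeasurableSet B → MeasurableSet A →
      P (((fun ω (k : ℕ) => Y k ω) ⁻¹' B ∩ (fun ω (k : ℕ) => Z'' k ω) ⁻¹' A) ∩ S)
        = Measure.map (fun ω (k : ℕ) => Z'' k ω) P A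
            * P ((fun ω (k : ℕ) => Y k ω) ⁻¹' B ∩ S))
    (hprod : ∀ y : ℕ → ℝ,
      Measure.map (fun ω (k : ℕ) => Z'' k ω) P
          {z : ℕ → ℝ | ∀ j ∈ Finset.Icc 1 n, (n : ℝ) * (y j * z j) ≤ x}
        = ∏ j ∈ Finset.Icc 1 n, (1 - tl μ0 x n (y j))) :
    (P.restrict S) (GS Y Z'' x n n) = ∫⁻ ω, qq μ0 x n Y n ω ∂(P.restrict S) := by
  classical
  set Yv : Ω → (ℕ → ℝ) := fun ω k => Y k ω with hYv
  set Zv : Ω → (ℕ → ℝ) := fun ω k => Z'' k ω with hZv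
  have hYvm : Measurable Yv := measurable_pi_iff.2 fun k => hYm k
  haveI : IsProbabilityMeasure (Measure.map Zv P) :=
    Measure.isProbabilityMeasure_map hZ''m.aemeasurable
  set f : (ℕ → ℝ) → (ℕ → ℝ) → ℝ≥0∞ :=
    fun y z => if (∀ j ∈ Finset.Icc 1 n, (n : ℝ) * (y j * z j) ≤ x) then 1 else 0 with hfdef
  have hsetm : MeasurableSet
      {p : (ℕ → ℝ) × (ℕ → ℝ) | ∀ j ∈ Finset.Icc 1 n, (n : ℝ) * (p.1 j * p.2 j) ≤ x} := by
    have h : {p : (ℕ → ℝ) × (ℕ → ℝ) | ∀ j ∈ Finset.Icc 1 n, (n : ℝ) * (p.1 j * p.2 j) ≤ x}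
        = ⋂ j ∈ Finset.Icc 1 n, {p : (ℕ → ℝ) × (ℕ → ℝ) | (n : ℝ) * (p.1 j * p.2 j) ≤ x} := by
      ext p; simp
    rw [h]
    refine MeasurableSet.biInter (Finset.Icc 1 n).countable_toSet fun j _ => ?_
    refine measurableSet_le ?_ measurable_const
    fun_prop
  have hfm : Measurable (Function.uncurry f) :=
    Measurable.ite hsetm measurable_const measurable_const
  have hfacμ : ∀ (B : Set (ℕ → ℝ)) (A : Set (ℕ → ℝ)), MeasurableSet B → MeasurableSet A →
      (P.restrict S) (Yv ⁻¹' B ∩ Zv ⁻¹' A)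
        = (P.restrict S) (Yv ⁻¹' B) * (Measure.map Zv P) A := by
    intro B A hB hA
    rw [Measure.restrict_apply ((hYvm hB).inter (hZ''m hA)), Measure.restrict_apply (hYvm hB),
      hfac B A hB hA, mul_comm]
  have htr := lintegral_transfer (P.restrict S) hYvm hZ''m (Measure.map Zv P) hfacμ f hfm
  have hGSm : MeasurableSet (GS Y Z'' x n n) :=
    GS_measurable Y Z'' hYm (fun k => (measurable_pi_apply k).comp hZ''m) x n n
  have hL : ∀ ω, f (Yv ω) (Zv ω) = (GS Y Z'' x n n).indicator (1 : Ω → ℝ≥0∞) ω := by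
    intro ω
    simp only [hfdef, Set.indicator_apply, Pi.one_apply, GS, mem_setOf_eq, hYv, hZv]
    by_cases h : (∀ j ∈ Finset.Icc 1 n, (n : ℝ) * (Y j ω * Z'' j ω) ≤ x) <;> simp [h]
  have hinner : ∀ ω, (∫⁻ z, f (Yv ω) z ∂(Measure.map Zv P)) = qq μ0 x n Y n ω := by
    intro ω
    have hmsfib : MeasurableSet
        {z : ℕ → ℝ | ∀ j ∈ Finset.Icc 1 n, (n : ℝ) * (Yv ω j * z j) ≤ x} := by
      have h : {z : ℕ → ℝ | ∀ j ∈ Finset.Icc 1 n, (n : ℝ) * (Yv ω j * z j) ≤ x}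
          = ⋂ j ∈ Finset.Icc 1 n, {z : ℕ → ℝ | (n : ℝ) * (Yv ω j * z j) ≤ x} := by
        ext z; simp
      rw [h]
      refine MeasurableSet.biInter (Finset.Icc 1 n).countable_toSet fun j _ => ?_
      exact measurableSet_le (measurable_const.mul
        (measurable_const.mul (measurable_pi_apply j))) measurable_const
    have h1 : ∀ z : ℕ → ℝ, f (Yv ω) z
        = ({z : ℕ → ℝ | ∀ j ∈ Finset.Icc 1 n, (n : ℝ) * (Yv ω j * z j) ≤ x}).indicator
            (1 : (ℕ → ℝ) → ℝ≥0∞) z := by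
      intro z; simp only [hfdef, Set.indicator_apply, Pi.one_apply, mem_setOf_eq]
      by_cases h : (∀ j ∈ Finset.Icc 1 n, (n : ℝ) * (Yv ω j * z j) ≤ x) <;> simp [h]
    rw [lintegral_congr h1, lintegral_indicator_one hmsfib, hprod (Yv ω)]
    rfl
  calc (P.restrict S) (GS Y Z'' x n n)
      = ∫⁻ ω, (GS Y Z'' x n n).indicator (1 : Ω → ℝ≥0∞) ω ∂(P.restrict S) :=
        (lintegral_indicator_one hGSm).symm
    _ = ∫⁻ ω, f (Yv ω) (Zv ω) ∂(P.restrict S) := lintegral_congr fun ω => (hL ω).symm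
    _ = ∫⁻ ω, ∫⁻ z, f (Yv ω) z ∂(Measure.map Zv P) ∂(P.restrict S) := htr
    _ = ∫⁻ ω, qq μ0 x n Y n ω ∂(P.restrict S) := lintegral_congr hinner

end zblock

section core

lemma core (P : Measure Ω) [IsProbabilityMeasure P]
    (F : ℕ → MeasurableSpace Ω) (hFle : ∀ k, F k ≤ ‹MeasurableSpace Ω›) (hFmono : Monotone F)
    (Y Z : ℕ → Ω → ℝ) (hYmeas : ∀ k, Measurable[F k] (Y k))
    (hZFmeas : ∀ k, Measurable[F (k + 1)] (Z k))
    (μ0 : Measure ℝ) [IsProbabilityMeasure μ0] (hμ0 : μ0 {z | z < 0} = 0)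
    (x : ℝ) (hx : 0 < x) (n : ℕ) (S S' : Set Ω) (hS'S : S' ⊆ S)
    (hfacS : ∀ (i : ℕ) (C : Set Ω), MeasurableSet[F i] C → ∀ A : Set ℝ, MeasurableSet A →
      P ((Z i) ⁻¹' A ∩ (C ∩ S)) = μ0 A * P (C ∩ S))
    (hfacS' : ∀ (i : ℕ) (C : Set Ω), MeasurableSet[F i] C → ∀ A : Set ℝ, MeasurableSet A →
      P ((Z i) ⁻¹' A ∩ (C ∩ S')) = μ0 A * P (C ∩ S')) :
    ((P.restrict S) (SSum Y Z x n)).toReal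
        + 2 * (∫⁻ ω, qq μ0 x n Y n ω ∂(P.restrict S)).toReal
        + 2 * ((P.restrict S') univ).toReal
      ≤ 2 * ((P.restrict S) univ).toReal
        + ((P.restrict S') (SSum Y Z x n)).toReal
        + 2 * (∫⁻ ω, qq μ0 x n Y n ω ∂(P.restrict S')).toReal := by
  classical
  have hle : P.restrict S' ≤ P.restrict S := Measure.restrict_mono hS'S le_rfl
  have hYamb : ∀ k, Measurable (Y k) := fun k => (hYmeas k).mono (hFle k) le_rfl
  have hZamb : ∀ k, Measurable (Z k) := fun k => (hZFmeas k).mono (hFle (k + 1)) le_rfl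
  set cind : ℕ → Ω → ℝ≥0∞ := fun k ω => if ω ∈ GS Y Z x n k then 0 else 1 with hcind
  set gind : ℕ → Ω → ℝ≥0∞ := fun k ω => if ω ∈ GS Y Z x n k then 1 else 0 with hgind
  set ff : ℕ → Ω → ℝ≥0∞ := fun k ω => qq μ0 x n Y k ω * (1 + cind k ω) with hff
  set uu : ℕ → Ω → ℝ≥0∞ := fun k ω =>
    qq μ0 x n Y (k + 1) ω * (1 + cind k ω)
      + (qq μ0 x n Y (k + 1) ω * gind k ω) * tl μ0 x n (Y (k + 1) ω) with huu
  set w : Ω → ℝ≥0∞ := fun ω =>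
    (if ω ∈ SSum Y Z x n then (1 : ℝ≥0∞) else 0) + 2 * qq μ0 x n Y n ω with hw
  -- ambient measurability
  have hGSamb : ∀ k, MeasurableSet (GS Y Z x n k) := fun k =>
    GS_measurable Y Z hYamb hZamb x n k
  have hqqamb : ∀ k, Measurable (qq μ0 x n Y k) := fun k => qq_measurable Y hYamb μ0 x n k
  have hcindamb : ∀ k, Measurable (cind k) := fun k =>
    Measurable.ite (hGSamb k) measurable_const measurable_const
  have hgindamb : ∀ k, Measurable (gind k) := fun k =>
    Measurable.ite (hGSamb k) measurable_const measurable_const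
  have hffamb : ∀ k, Measurable (ff k) := fun k =>
    (hqqamb k).mul (measurable_const.add (hcindamb k))
  have huuamb : ∀ k, Measurable (uu k) := fun k =>
    ((hqqamb (k + 1)).mul (measurable_const.add (hcindamb k))).add
      (((hqqamb (k + 1)).mul (hgindamb k)).mul ((tl_measurable μ0 x n).comp (hYamb (k + 1))))
  have hSSumamb : MeasurableSet (SSum Y Z x n) := SSum_measurable Y Z hYamb hZamb x n
  have hwamb : Measurable w :=
    (Measurable.ite hSSumamb measurable_const measurable_const).add
      (measurable_const.mul (hqqamb n))
  -- pointwise bounds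
  have hcind_le : ∀ k ω, cind k ω ≤ 1 := by
    intro k ω; by_cases h : ω ∈ GS Y Z x n k <;> simp [hcind, h]
  have h1f_le : ∀ k ω, (1 : ℝ≥0∞) + ff k ω ≤ 3 := by
    intro k ω
    have : ff k ω ≤ 2 := by
      calc ff k ω ≤ 1 * (1 + 1) :=
            mul_le_mul' (qq_le_one μ0 x n Y k ω) (add_le_add le_rfl (hcind_le k ω))
        _ = 2 := by norm_num
    calc (1 : ℝ≥0∞) + ff k ω ≤ 1 + 2 := add_le_add le_rfl this
      _ = 3 := by norm_num
  have hw_le3 : ∀ ω, w ω ≤ 3 := by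
    intro ω
    have h2 : 2 * qq μ0 x n Y n ω ≤ 2 := by
      calc 2 * qq μ0 x n Y n ω ≤ 2 * 1 := mul_le_mul_right (qq_le_one μ0 x n Y n ω) 2
        _ = 2 := mul_one 2
    have h1 : (if ω ∈ SSum Y Z x n then (1 : ℝ≥0∞) else 0) ≤ 1 := by
      by_cases h : ω ∈ SSum Y Z x n <;> simp [h]
    calc w ω ≤ 1 + 2 := add_le_add h1 h2
      _ = 3 := by norm_num
  -- finiteness
  haveI : IsFiniteMeasure (P.restrict S) := inferInstance
  haveI : IsFiniteMeasure (P.restrict S') := inferInstance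
  have hfin : ∀ (ρ : Measure Ω) [IsFiniteMeasure ρ] (h : Ω → ℝ≥0∞), (∀ ω, h ω ≤ 3) →
      (∫⁻ ω, h ω ∂ρ) ≠ ∞ := by
    intro ρ _ h hb
    have h1 : ∫⁻ ω, h ω ∂ρ ≤ 3 * ρ univ := by
      calc ∫⁻ ω, h ω ∂ρ ≤ ∫⁻ _, 3 ∂ρ := lintegral_mono hb
        _ = 3 * ρ univ := lintegral_const 3
    exact (h1.trans_lt (ENNReal.mul_lt_top (by norm_num) (measure_lt_top ρ univ))).ne
  -- splitting identity for the complement indicator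
  have hcsucc : ∀ k ω, cind (k + 1) ω
      = cind k ω + gind k ω * (if x < (n : ℝ) * (Y (k + 1) ω * Z (k + 1) ω) then 1 else 0) := by
    intro k ω
    have hmem : ω ∈ GS Y Z x n (k + 1)
        ↔ (ω ∈ GS Y Z x n k ∧ (n : ℝ) * (Y (k + 1) ω * Z (k + 1) ω) ≤ x) := by
      rw [GS_succ x n Y Z k]; simp [mem_inter_iff, mem_setOf_eq]
    by_cases h1 : ω ∈ GS Y Z x n k
    · by_cases h2 : x < (n : ℝ) * (Y (k + 1) ω * Z (k + 1) ω)
      · have hnot : ω ∉ GS Y Z x n (k + 1) := by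
          rw [hmem]; rintro ⟨-, hle'⟩; exact absurd h2 (not_lt.mpr hle')
        simp [hcind, hgind, h1, h2, hnot]
      · have hyes : ω ∈ GS Y Z x n (k + 1) := hmem.mpr ⟨h1, not_lt.mp h2⟩
        simp [hcind, hgind, h1, h2, hyes]
    · have hnot : ω ∉ GS Y Z x n (k + 1) := fun hmem' => h1 (hmem.mp hmem').1
      simp [hcind, hgind, h1, hnot]
  have hsplit : ∀ k ω, (1 : ℝ≥0∞) + ff (k + 1) ω
      = (1 + qq μ0 x n Y (k + 1) ω * (1 + cind k ω))
        + (qq μ0 x n Y (k + 1) ω * gind k ω)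
            * (if x < (n : ℝ) * (Y (k + 1) ω * Z (k + 1) ω) then 1 else 0) := by
    intro k ω
    simp only [hff]
    rw [hcsucc k ω]
    ring
  -- the peel identity per admissible restriction set
  have hid : ∀ (T : Set Ω),
      (∀ (i : ℕ) (C : Set Ω), MeasurableSet[F i] C → ∀ A : Set ℝ, MeasurableSet A →
        P ((Z i) ⁻¹' A ∩ (C ∩ T)) = μ0 A * P (C ∩ T)) → ∀ k,
      ∫⁻ ω, (1 + ff (k + 1) ω) ∂(P.restrict T)
        = ∫⁻ ω, (1 + uu k ω) ∂(P.restrict T) := by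
    intro T hfacT k
    have hφF : Measurable[F (k + 1)] (fun ω => qq μ0 x n Y (k + 1) ω * gind k ω) := by
      refine Measurable.mul (qq_measurableF F hFmono Y hYmeas μ0 x n (k + 1)) ?_
      exact Measurable.ite (GS_measurableF F hFmono Y Z hYmeas hZFmeas x n k)
        measurable_const measurable_const
    have hpeel := peel P F hFle Y Z hZamb μ0 hμ0 x n T (k + 1) (hfacT (k + 1))
      (hYmeas (k + 1)) _ hφF
    have hm1A : Measurable (fun ω => (1 : ℝ≥0∞) + qq μ0 x n Y (k + 1) ω * (1 + cind k ω)) :=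
      measurable_const.add ((hqqamb (k + 1)).mul (measurable_const.add (hcindamb k)))
    calc ∫⁻ ω, (1 + ff (k + 1) ω) ∂(P.restrict T)
        = ∫⁻ ω, ((1 + qq μ0 x n Y (k + 1) ω * (1 + cind k ω))
            + (qq μ0 x n Y (k + 1) ω * gind k ω)
                * (if x < (n : ℝ) * (Y (k + 1) ω * Z (k + 1) ω) then 1 else 0)) ∂(P.restrict T) :=
          lintegral_congr fun ω => hsplit k ω
      _ = (∫⁻ ω, (1 + qq μ0 x n Y (k + 1) ω * (1 + cind k ω)) ∂(P.restrict T))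
            + ∫⁻ ω, (qq μ0 x n Y (k + 1) ω * gind k ω)
                * (if x < (n : ℝ) * (Y (k + 1) ω * Z (k + 1) ω) then 1 else 0) ∂(P.restrict T) :=
          lintegral_add_left hm1A _
      _ = (∫⁻ ω, (1 + qq μ0 x n Y (k + 1) ω * (1 + cind k ω)) ∂(P.restrict T))
            + ∫⁻ ω, (qq μ0 x n Y (k + 1) ω * gind k ω) * tl μ0 x n (Y (k + 1) ω) ∂(P.restrict T) := by
          rw [hpeel]
      _ = ∫⁻ ω, ((1 + qq μ0 x n Y (k + 1) ω * (1 + cind k ω))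
            + (qq μ0 x n Y (k + 1) ω * gind k ω) * tl μ0 x n (Y (k + 1) ω)) ∂(P.restrict T) :=
          (lintegral_add_left hm1A _).symm
      _ = ∫⁻ ω, (1 + uu k ω) ∂(P.restrict T) := lintegral_congr fun ω => by
            simp only [huu]; ring
  -- pointwise supermartingale inequality
  have huu_le : ∀ k ω, uu k ω ≤ ff k ω := by
    intro k ω
    set t := tl μ0 x n (Y (k + 1) ω) with ht
    have ht1 : t ≤ 1 := tl_le_one μ0 x n _
    have hqs : qq μ0 x n Y (k + 1) ω = qq μ0 x n Y k ω * (1 - t) := qq_succ μ0 x n Y k ω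
    by_cases h : ω ∈ GS Y Z x n k
    · have e1 : cind k ω = 0 := by simp [hcind, h]
      have e2 : gind k ω = 1 := by simp [hgind, h]
      have key : (1 - t) * (1 + t) ≤ 1 := by
        have h1 : (1 - t) * t ≤ t := by
          calc (1 - t) * t ≤ 1 * t := mul_le_mul_left tsub_le_self t
            _ = t := one_mul t
        calc (1 - t) * (1 + t) = (1 - t) + (1 - t) * t := by ring
          _ ≤ (1 - t) + t := add_le_add le_rfl h1
          _ = 1 := tsub_add_cancel_of_le ht1
      calc uu k ω = qq μ0 x n Y k ω * ((1 - t) * (1 + t)) := by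
            simp only [huu, e1, e2, hqs]; ring
        _ ≤ qq μ0 x n Y k ω * 1 := mul_le_mul_right key _
        _ = ff k ω := by simp [hff, e1]
    · have e1 : cind k ω = 1 := by simp [hcind, h]
      have e2 : gind k ω = 0 := by simp [hgind, h]
      have h1t : (1 : ℝ≥0∞) - t ≤ 1 := tsub_le_self
      calc uu k ω = qq μ0 x n Y k ω * (1 - t) * (1 + 1) := by
            simp only [huu, e1, e2, hqs]; ring
        _ ≤ qq μ0 x n Y k ω * 1 * (1 + 1) := by
            exact mul_le_mul_left (mul_le_mul_right h1t _) _
        _ = ff k ω := by simp [hff, e1]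
  -- base pointwise inequality
  have hw_le : ∀ ω, w ω ≤ 1 + ff n ω := by
    intro ω
    by_cases hs : ω ∈ SSum Y Z x n
    · have hG : ω ∉ GS Y Z x n n := SSum_subset_GS_compl x n Y Z hx hs
      have e1 : cind n ω = 1 := by simp [hcind, hG]
      simp only [hw, hff, e1, if_pos hs]
      apply le_of_eq
      ring
    · simp only [hw, hff, if_neg hs, zero_add]
      calc 2 * qq μ0 x n Y n ω = qq μ0 x n Y n ω + qq μ0 x n Y n ω := two_mul _
        _ ≤ 1 + qq μ0 x n Y n ω := add_le_add (qq_le_one μ0 x n Y n ω) le_rfl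
        _ ≤ 1 + qq μ0 x n Y n ω * (1 + cind n ω) := by
            refine add_le_add le_rfl ?_
            calc qq μ0 x n Y n ω = qq μ0 x n Y n ω * 1 := (mul_one _).symm
              _ ≤ qq μ0 x n Y n ω * (1 + cind n ω) := mul_le_mul_right le_self_add _
  -- endpoint values
  have hend : ∀ (ρ : Measure Ω), ∫⁻ ω, (1 + ff 0 ω) ∂ρ = 2 * ρ univ := by
    intro ρ
    have h0 : ∀ ω, (1 : ℝ≥0∞) + ff 0 ω = 2 := by
      intro ω
      have e1 : cind 0 ω = 0 := by simp [hcind, GS_zero]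
      simp only [hff, e1, qq_zero, add_zero, one_mul]
      norm_num
    rw [lintegral_congr h0, lintegral_const]
  have hwI : ∀ (ρ : Measure Ω),
      ∫⁻ ω, w ω ∂ρ = ρ (SSum Y Z x n) + 2 * ∫⁻ ω, qq μ0 x n Y n ω ∂ρ := by
    intro ρ
    have hsplitw : ∫⁻ ω, w ω ∂ρ
        = (∫⁻ ω, (if ω ∈ SSum Y Z x n then (1 : ℝ≥0∞) else 0) ∂ρ)
          + ∫⁻ ω, 2 * qq μ0 x n Y n ω ∂ρ :=
      lintegral_add_left (Measurable.ite hSSumamb measurable_const measurable_const) _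
    have hind : ∫⁻ ω, (if ω ∈ SSum Y Z x n then (1 : ℝ≥0∞) else 0) ∂ρ = ρ (SSum Y Z x n) := by
      have h1 : ∀ ω, (if ω ∈ SSum Y Z x n then (1 : ℝ≥0∞) else 0)
          = (SSum Y Z x n).indicator (1 : Ω → ℝ≥0∞) ω := by
        intro ω; by_cases h : ω ∈ SSum Y Z x n <;> simp [h]
      rw [lintegral_congr h1, lintegral_indicator_one hSSumamb]
    rw [hsplitw, hind, lintegral_const_mul _ (hqqamb n)]
  -- the chain
  have hTstep : ∀ k,
      ((∫⁻ ω, w ω ∂(P.restrict S)).toReal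
          + (∫⁻ ω, (1 + ff (k + 1) ω) ∂(P.restrict S')).toReal
        ≤ (∫⁻ ω, (1 + ff (k + 1) ω) ∂(P.restrict S)).toReal
          + (∫⁻ ω, w ω ∂(P.restrict S')).toReal) →
      ((∫⁻ ω, w ω ∂(P.restrict S)).toReal
          + (∫⁻ ω, (1 + ff k ω) ∂(P.restrict S')).toReal
        ≤ (∫⁻ ω, (1 + ff k ω) ∂(P.restrict S)).toReal
          + (∫⁻ ω, w ω ∂(P.restrict S')).toReal) := by
    intro k hk
    rw [hid S hfacS k, hid S' hfacS' k] at hk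
    have hpair := paired_step (u := fun ω => 1 + uu k ω) (v := fun ω => 1 + ff k ω) hle (measurable_const.add (huuamb k))
      (fun ω => add_le_add le_rfl (huu_le k ω))
      (hfin (P.restrict S) _ (fun ω => h1f_le k ω))
    linarith
  have hTbase : (∫⁻ ω, w ω ∂(P.restrict S)).toReal
      + (∫⁻ ω, (1 + ff n ω) ∂(P.restrict S')).toReal
    ≤ (∫⁻ ω, (1 + ff n ω) ∂(P.restrict S)).toReal
      + (∫⁻ ω, w ω ∂(P.restrict S')).toReal :=
    paired_step hle hwamb hw_le (hfin (P.restrict S) _ (fun ω => h1f_le n ω))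
  have hTall : ∀ j, j ≤ n →
      (∫⁻ ω, w ω ∂(P.restrict S)).toReal
          + (∫⁻ ω, (1 + ff (n - j) ω) ∂(P.restrict S')).toReal
        ≤ (∫⁻ ω, (1 + ff (n - j) ω) ∂(P.restrict S)).toReal
          + (∫⁻ ω, w ω ∂(P.restrict S')).toReal := by
    intro j
    induction j with
    | zero => intro _; simpa using hTbase
    | succ j ih =>
      intro hj
      have h1 := ih (Nat.le_of_succ_le hj)
      have e : n - j = (n - (j + 1)) + 1 := by omega
      rw [e] at h1
      exact hTstep _ h1
  have hT0 := hTall n le_rfl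
  rw [Nat.sub_self] at hT0
  -- final conversions to the stated form
  have hconv : ∀ (T : Set Ω),
      (∫⁻ ω, w ω ∂(P.restrict T)).toReal
        = ((P.restrict T) (SSum Y Z x n)).toReal
          + 2 * (∫⁻ ω, qq μ0 x n Y n ω ∂(P.restrict T)).toReal := by
    intro T
    haveI : IsFiniteMeasure (P.restrict T) := inferInstance
    have hqfin : (∫⁻ ω, qq μ0 x n Y n ω ∂(P.restrict T)) ≠ ∞ := by
      refine hfin (P.restrict T) _ (fun ω => ?_)
      exact (qq_le_one μ0 x n Y n ω).trans (by norm_num)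
    rw [hwI (P.restrict T), ENNReal.toReal_add (measure_ne_top _ _)
      (ENNReal.mul_ne_top (by norm_num) hqfin), ENNReal.toReal_mul]
    norm_num
  have hendconv : ∀ (T : Set Ω),
      (∫⁻ ω, (1 + ff 0 ω) ∂(P.restrict T)).toReal = 2 * ((P.restrict T) univ).toReal := by
    intro T
    rw [hend (P.restrict T), ENNReal.toReal_mul]
    norm_num
  rw [hconv S, hconv S', hendconv S, hendconv S'] at hT0
  linarith

end core

end RSMIAux

open RSMIAux

/-- Lemma 5.2 of Hult–Lindskog: maximal inequality for random sums with
predictable weights.  `Z` is i.i.d. nonnegative, `Y k` is `𝓕 k`-measurable,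
`Z k` is `𝓕 (k+1)`-measurable and independent of `σ(𝓕 k, N)`, and `Z'` is an
independent copy of the sequence `Z`, independent of `((Y k), N)`.  Then
`P(∑_{k=1}^N Y_k Z_k > x) ≤ 2 P(N • max_{1≤k≤N} Y_k Z'_k > x)`. -/
theorem random_sum_maximal_inequality
    {Ω : Type*} [MeasurableSpace Ω] {P : Measure Ω} [IsProbabilityMeasure P]
    (Z Z' : ℕ → Ω → ℝ) (Y : ℕ → Ω → ℝ) (N : Ω → ℕ)
    (F : ℕ → MeasurableSpace Ω) (hFle : ∀ k, F k ≤ ‹MeasurableSpace Ω›)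
    (hFmono : Monotone F)
    (hZpos : ∀ k ω, 0 ≤ Z k ω) (hYpos : ∀ k ω, 0 ≤ Y k ω)
    (hZiid : iIndepFun Z P)
    (hZid : ∀ k, Measure.map (Z k) P = Measure.map (Z 0) P)
    (hYmeas : ∀ k, Measurable[F k] (Y k))
    (hZmeas : ∀ k, Measurable[F (k + 1)] (Z k))
    (hZindep : ∀ k, Indep (MeasurableSpace.comap (Z k) inferInstance)
        (F k ⊔ MeasurableSpace.comap N inferInstance) P)
    (hZ'dist : Measure.map (fun ω => fun k => Z' k ω) P
        = Measure.map (fun ω => fun k => Z k ω) P)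
    (hZ'indep : Indep (MeasurableSpace.comap (fun ω => fun k => Z' k ω) inferInstance)
        ((⨆ k, MeasurableSpace.comap (Y k) inferInstance)
          ⊔ MeasurableSpace.comap N inferInstance) P)
    (x : ℝ) (hx : 0 < x) :
    P {ω | x < ∑ k ∈ Finset.Icc 1 (N ω), Y k ω * Z k ω}
      ≤ 2 * P {ω | x < (N ω : ℝ) * ⨆ k ∈ Finset.Icc 1 (N ω), Y k ω * Z' k ω} := by
  classical
  have hmono_ms : ∀ {m m' : MeasurableSpace Ω} {s : Set Ω}, m ≤ m' →
      MeasurableSet[m] s → MeasurableSet[m'] s := fun hle hs => hle _ hs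
  have hYamb : ∀ k, Measurable (Y k) := fun k => (hYmeas k).mono (hFle k) le_rfl
  have hZamb : ∀ k, Measurable (Z k) := fun k => (hZmeas k).mono (hFle (k + 1)) le_rfl
  set Zvec : Ω → ℕ → ℝ := fun ω k => Z k ω with hZvecdef
  have hZvecm : Measurable Zvec := measurable_pi_iff.2 hZamb
  set Yvec : Ω → ℕ → ℝ := fun ω k => Y k ω with hYvecdef
  have hYvecm : Measurable Yvec := measurable_pi_iff.2 hYamb
  -- Z' is a.e. measurable, take a measurable version Z''
  have hZ'am : AEMeasurable (fun ω (k : ℕ) => Z' k ω) P := by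
    by_contra h
    rw [Measure.map_of_not_aemeasurable h] at hZ'dist
    haveI : IsProbabilityMeasure (Measure.map Zvec P) :=
      Measure.isProbabilityMeasure_map hZvecm.aemeasurable
    have h1 : (Measure.map Zvec P) univ = 1 := measure_univ
    rw [← hZ'dist] at h1
    simp at h1
  set Z''vec : Ω → ℕ → ℝ := hZ'am.mk (fun ω (k : ℕ) => Z' k ω) with hZ''vecdef
  set Z'' : ℕ → Ω → ℝ := fun k ω => Z''vec ω k with hZ''def
  have hZ''m : Measurable Z''vec := hZ'am.measurable_mk
  have hZ''amb : ∀ k, Measurable (Z'' k) := fun k => (measurable_pi_apply k).comp hZ''m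
  have heq : ∀ᵐ ω ∂P, (fun k => Z' k ω) = Z''vec ω := hZ'am.ae_eq_mk
  have hZ''veceq : Z''vec = fun ω (k : ℕ) => Z'' k ω := by
    funext ω k; rfl
  -- law of a single Z
  set μ0 : Measure ℝ := Measure.map (Z 0) P with hμ0def
  haveI : IsProbabilityMeasure μ0 := Measure.isProbabilityMeasure_map (hZamb 0).aemeasurable
  have hμ0 : μ0 {z : ℝ | z < 0} = 0 := by
    have hpre : (Z 0) ⁻¹' {z : ℝ | z < 0} = ∅ := by
      ext ω; simp [not_lt.mpr (hZpos 0 ω)]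
    have hms : MeasurableSet {z : ℝ | z < 0} := measurableSet_Iio
    calc μ0 {z : ℝ | z < 0} = P ((Z 0) ⁻¹' {z : ℝ | z < 0}) :=
          Measure.map_apply (hZamb 0) hms
      _ = 0 := by rw [hpre, measure_empty]
  -- factorization property for single Z against F_i and N
  have hfacN : ∀ (s : Set ℕ) (i : ℕ) (C : Set Ω), MeasurableSet[F i] C →
      ∀ A : Set ℝ, MeasurableSet A →
      P ((Z i) ⁻¹' A ∩ (C ∩ N ⁻¹' s)) = μ0 A * P (C ∩ N ⁻¹' s) := by
    intro s i C hC A hA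
    have h1 : MeasurableSet[F i ⊔ MeasurableSpace.comap N inferInstance] (C ∩ N ⁻¹' s) := by
      refine MeasurableSet.inter (hmono_ms le_sup_left hC) (hmono_ms le_sup_right ?_)
      exact ⟨s, MeasurableSet.of_discrete, rfl⟩
    have h2 := (Indep_iff _ _ P).1 (hZindep i) ((Z i) ⁻¹' A) (C ∩ N ⁻¹' s) ⟨A, hA, rfl⟩ h1
    rw [h2]
    congr 1
    exact (Measure.map_apply (hZamb i) hA).symm.trans (by rw [hZid i])
  -- factorization for the block Z'' against (Y, N)
  have hYvecM : Measurable[⨆ k, MeasurableSpace.comap (Y k) inferInstance] Yvec := by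
    letI mY : MeasurableSpace Ω := ⨆ k, MeasurableSpace.comap (Y k) inferInstance
    refine measurable_pi_iff.2 fun k => ?_
    exact Measurable.of_comap_le (le_iSup (fun k => MeasurableSpace.comap (Y k) inferInstance) k)
  have hfacZ'' : ∀ (s : Set ℕ) (B A : Set (ℕ → ℝ)), MeasurableSet B → MeasurableSet A →
      P ((Yvec ⁻¹' B ∩ Z''vec ⁻¹' A) ∩ N ⁻¹' s)
        = (Measure.map Z''vec P) A * P (Yvec ⁻¹' B ∩ N ⁻¹' s) := by
    intro s B A hB hA
    have hswap : P ((Yvec ⁻¹' B ∩ Z''vec ⁻¹' A) ∩ N ⁻¹' s)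
        = P ((fun ω (k : ℕ) => Z' k ω) ⁻¹' A ∩ (Yvec ⁻¹' B ∩ N ⁻¹' s)) := by
      apply measure_congr
      filter_upwards [heq] with ω hω
      show (ω ∈ (Yvec ⁻¹' B ∩ Z''vec ⁻¹' A) ∩ N ⁻¹' s)
          = (ω ∈ (fun ω (k : ℕ) => Z' k ω) ⁻¹' A ∩ (Yvec ⁻¹' B ∩ N ⁻¹' s))
      simp only [mem_inter_iff, mem_preimage]
      rw [hω]
      exact propext (by tauto)
    rw [hswap]
    have hmemb : MeasurableSet[(⨆ k, MeasurableSpace.comap (Y k) inferInstance)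
        ⊔ MeasurableSpace.comap N inferInstance] (Yvec ⁻¹' B ∩ N ⁻¹' s) :=
      MeasurableSet.inter (hmono_ms le_sup_left (hYvecM hB))
        (hmono_ms le_sup_right ⟨s, MeasurableSet.of_discrete, rfl⟩)
    have h2 := (Indep_iff _ _ P).1 hZ'indep ((fun ω (k : ℕ) => Z' k ω) ⁻¹' A)
      (Yvec ⁻¹' B ∩ N ⁻¹' s) ⟨A, hA, rfl⟩ hmemb
    rw [h2]
    congr 1
    rw [Measure.map_apply hZ''m hA]
    apply measure_congr
    filter_upwards [heq] with ω hω
    show (ω ∈ (fun ω (k : ℕ) => Z' k ω) ⁻¹' A) = (ω ∈ Z''vec ⁻¹' A)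
    simp only [mem_preimage]
    rw [hω]
  -- iid product law for the block
  have hmapZ'' : Measure.map Z''vec P = Measure.map Zvec P := by
    have h1 : Measure.map Z''vec P = Measure.map (fun ω (k : ℕ) => Z' k ω) P :=
      (Measure.map_congr heq).symm
    rw [h1, hZ'dist]
  have hprod : ∀ (y : ℕ → ℝ) (n : ℕ),
      (Measure.map Z''vec P) {z : ℕ → ℝ | ∀ j ∈ Finset.Icc 1 n, (n : ℝ) * (y j * z j) ≤ x}
        = ∏ j ∈ Finset.Icc 1 n, (1 - tl μ0 x n (y j)) := by
    intro y n
    have hsm : ∀ j, MeasurableSet {t : ℝ | (n : ℝ) * (y j * t) ≤ x} := fun j =>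
      measurableSet_le (measurable_const.mul (measurable_const.mul measurable_id))
        measurable_const
    have hms : MeasurableSet {z : ℕ → ℝ | ∀ j ∈ Finset.Icc 1 n, (n : ℝ) * (y j * z j) ≤ x} := by
      have h : {z : ℕ → ℝ | ∀ j ∈ Finset.Icc 1 n, (n : ℝ) * (y j * z j) ≤ x}
          = ⋂ j ∈ Finset.Icc 1 n, {z : ℕ → ℝ | (n : ℝ) * (y j * z j) ≤ x} := by
        ext z; simp
      rw [h]
      refine MeasurableSet.biInter (Finset.Icc 1 n).countable_toSet fun j _ => ?_
      exact measurableSet_le (measurable_const.mul (measurable_const.mul (measurable_pi_apply j)))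
        measurable_const
    have hpre : Zvec ⁻¹' {z : ℕ → ℝ | ∀ j ∈ Finset.Icc 1 n, (n : ℝ) * (y j * z j) ≤ x}
        = ⋂ j ∈ Finset.Icc 1 n, (Z j) ⁻¹' {t : ℝ | (n : ℝ) * (y j * t) ≤ x} := by
      ext ω; simp [hZvecdef]
    rw [hmapZ'', Measure.map_apply hZvecm hms, hpre,
      hZiid.measure_inter_preimage_eq_mul (Finset.Icc 1 n) (fun j hj => hsm j)]
    refine Finset.prod_congr rfl fun j _ => ?_
    rw [← Measure.map_apply (hZamb j) (hsm j), hZid j]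
    exact tl_compl μ0 x n hμ0 (y j)
  -- the monotone families of events
  set NN : ℕ → Set Ω := fun m => N ⁻¹' (Set.Ici m) with hNNdef
  set E : ℕ → Set Ω := fun n => (GS Y Z'' x n n)ᶜ with hEdef
  have hSSms : ∀ n, MeasurableSet (SSum Y Z x n) := fun n =>
    SSum_measurable Y Z hYamb hZamb x n
  have hEms : ∀ n, MeasurableSet (E n) :=
    fun n => (GS_measurable Y Z'' hYamb hZ''amb x n n).compl
  -- zblock instantiation
  have hzb : ∀ (m n : ℕ), (P.restrict (NN m)) (GS Y Z'' x n n)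
      = ∫⁻ ω, qq μ0 x n Y n ω ∂(P.restrict (NN m)) := by
    intro m n
    refine zblock P Y hYamb Z'' (by rw [← hZ''veceq]; exact hZ''m) μ0 x n (NN m) ?_ ?_
    · intro B A hB hA
      have := hfacZ'' (Set.Ici m) B A hB hA
      rw [← hZ''veceq]
      exact this
    · intro y
      rw [← hZ''veceq]
      exact hprod y n
  have hz2 : ∀ m n, ((P.restrict (NN m)) (E n)).toReal
        + (∫⁻ ω, qq μ0 x n Y n ω ∂(P.restrict (NN m))).toReal
      = ((P.restrict (NN m)) univ).toReal := by
    intro m n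
    haveI : IsFiniteMeasure (P.restrict (NN m)) := inferInstance
    have hadd : (P.restrict (NN m)) (GS Y Z'' x n n) + (P.restrict (NN m)) (E n)
        = (P.restrict (NN m)) univ := by
      rw [hEdef]
      exact measure_add_measure_compl (GS_measurable Y Z'' hYamb hZ''amb x n n)
    rw [← hzb m n]
    have h1 := congrArg ENNReal.toReal hadd
    rw [ENNReal.toReal_add (measure_ne_top _ _) (measure_ne_top _ _)] at h1
    linarith
  -- core instantiations
  have hNNanti : ∀ m, NN (m + 1) ⊆ NN m := by
    intro m ω hω
    exact le_trans (Nat.le_succ m) hω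
  have hI3 : ∀ n m, ((P.restrict (NN m)) (SSum Y Z x n)).toReal
        + 2 * ((P.restrict (NN (m + 1))) (E n)).toReal
      ≤ 2 * ((P.restrict (NN m)) (E n)).toReal
        + ((P.restrict (NN (m + 1))) (SSum Y Z x n)).toReal := by
    intro n m
    have hc := core P F hFle hFmono Y Z hYmeas hZmeas μ0 hμ0 x hx n (NN m) (NN (m + 1))
      (hNNanti m) (fun i C hC A hA => hfacN (Set.Ici m) i C hC A hA)
      (fun i C hC A hA => hfacN (Set.Ici (m + 1)) i C hC A hA)
    have hz1 := hz2 m n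
    have hz1' := hz2 (m + 1) n
    linarith
  have hI1 : ∀ n m, ((P.restrict (NN m)) (SSum Y Z x n)).toReal
      ≤ 2 * ((P.restrict (NN m)) (E n)).toReal := by
    intro n m
    have hc := core P F hFle hFmono Y Z hYmeas hZmeas μ0 hμ0 x hx n (NN m) ∅
      (empty_subset _) (fun i C hC A hA => hfacN (Set.Ici m) i C hC A hA)
      (fun i C hC A hA => by simp)
    have hz1 := hz2 m n
    simp only [Measure.restrict_empty, Measure.coe_zero, Pi.zero_apply, ENNReal.toReal_zero,
      lintegral_zero_measure, mul_zero, add_zero] at hc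
    linarith
  -- monotonicity of E
  have hEmono : Monotone E := by
    refine monotone_nat_of_le_succ fun m => ?_
    intro ω hω
    simp only [hEdef, mem_compl_iff, GS, mem_setOf_eq, not_forall] at hω ⊢
    push_neg at hω ⊢
    obtain ⟨j, hj, hgt⟩ := hω
    have hjmem := Finset.mem_Icc.mp hj
    refine ⟨j, Finset.mem_Icc.mpr ⟨hjmem.1, hjmem.2.trans (Nat.le_succ m)⟩, ?_⟩
    have hvpos : 0 < Y j ω * Z'' j ω := by
      by_contra hc; push_neg at hc
      have h0 : (m : ℝ) * (Y j ω * Z'' j ω) ≤ 0 :=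
        mul_nonpos_of_nonneg_of_nonpos (Nat.cast_nonneg m) hc
      linarith
    have hmle : (m : ℝ) ≤ ((m + 1 : ℕ) : ℝ) := by push_cast; linarith
    nlinarith
  -- set inclusions for the left-hand side
  set L : Set Ω := {ω | x < ∑ k ∈ Finset.Icc 1 (N ω), Y k ω * Z k ω} with hLdef
  have hLsub : L ⊆ ⋃ m : ℕ, ((SSum Y Z x (m + 1) \ SSum Y Z x m) ∩ NN (m + 1)) := by
    intro ω hω
    have hex : ∃ j, ω ∈ SSum Y Z x j := ⟨N ω, hω⟩
    have hspec : ω ∈ SSum Y Z x (Nat.find hex) := Nat.find_spec hex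
    have hj0pos : 1 ≤ Nat.find hex := by
      rcases Nat.eq_zero_or_pos (Nat.find hex) with h0 | h
      · exfalso
        rw [h0, SSum_zero (x := x) Y Z hx] at hspec
        exact hspec
      · exact h
    have hjle : Nat.find hex ≤ N ω := Nat.find_le hω
    refine mem_iUnion.mpr ⟨Nat.find hex - 1, ?_⟩
    have he : Nat.find hex - 1 + 1 = Nat.find hex := Nat.succ_pred_eq_of_pos hj0pos
    refine ⟨⟨?_, ?_⟩, ?_⟩
    · rw [he]; exact hspec
    · exact Nat.find_min hex (by omega)
    · show N ω ∈ Set.Ici (Nat.find hex - 1 + 1)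
      rw [he]; exact hjle
  have hLbound : P L ≤ ∑' m, P ((SSum Y Z x (m + 1) \ SSum Y Z x m) ∩ NN (m + 1)) :=
    (measure_mono hLsub).trans (measure_iUnion_le _)
  -- right-hand side
  set R : Set Ω := {ω | x < (N ω : ℝ) * ⨆ k ∈ Finset.Icc 1 (N ω), Y k ω * Z' k ω} with hRdef
  set Tm : ℕ → Set Ω := fun m => E (m + 1) \ E m with hTmdef
  have hTdisj : Pairwise (Function.onFun Disjoint Tm) := by
    intro i j hij
    rcases hij.lt_or_gt with h | h
    · refine Set.disjoint_left.mpr fun ω hi hj' => ?_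
      exact hj'.2 (hEmono (Nat.succ_le_of_lt h) hi.1)
    · refine Set.disjoint_left.mpr fun ω hi hj' => ?_
      exact hi.2 (hEmono (Nat.succ_le_of_lt h) hj'.1)
  have hbad : P {ω | ¬ (fun k => Z' k ω) = Z''vec ω} = 0 := by
    have := heq
    rwa [ae_iff] at this
  have hRsub : ∀ m, Tm m ∩ NN (m + 1) ⊆ R ∪ {ω | ¬ (fun k => Z' k ω) = Z''vec ω} := by
    intro m ω hω
    by_cases hgood : (fun k => Z' k ω) = Z''vec ω
    swap
    · exact Or.inr hgood
    left
    obtain ⟨⟨hE1, -⟩, hN⟩ := hω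
    simp only [hEdef, mem_compl_iff, GS, mem_setOf_eq] at hE1
    push_neg at hE1
    obtain ⟨j, hj, hgt⟩ := hE1
    have hjmem := Finset.mem_Icc.mp hj
    have hNge : m + 1 ≤ N ω := hN
    have hZ'Z'' : Z' j ω = Z'' j ω := congrFun hgood j
    have hvZ : Y j ω * Z'' j ω = Y j ω * Z' j ω := by rw [hZ'Z'']
    rw [hvZ] at hgt
    have hvpos : 0 < Y j ω * Z' j ω := by
      by_contra hc; push_neg at hc
      have h0 : ((m + 1 : ℕ) : ℝ) * (Y j ω * Z' j ω) ≤ 0 :=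
        mul_nonpos_of_nonneg_of_nonpos (Nat.cast_nonneg _) hc
      linarith
    have hjN : j ∈ Finset.Icc 1 (N ω) :=
      Finset.mem_Icc.mpr ⟨hjmem.1, hjmem.2.trans hNge⟩
    have hbdd : BddAbove (Set.range fun k =>
        ⨆ (_ : k ∈ Finset.Icc 1 (N ω)), Y k ω * Z' k ω) := by
      refine BddAbove.mono ?_
        ((((Finset.Icc 1 (N ω)).finite_toSet.image fun k => Y k ω * Z' k ω).insert
          (0 : ℝ)).bddAbove)
      rintro v ⟨k, rfl⟩
      simp only [Set.mem_insert_iff, Set.mem_image, Finset.mem_coe]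
      by_cases hk : k ∈ Finset.Icc 1 (N ω)
      · exact Or.inr ⟨k, hk, (ciSup_pos (f := fun _ : k ∈ Finset.Icc 1 (N ω) => Y k ω * Z' k ω) hk).symm⟩
      · left
        rw [ciSup_neg hk, Real.sSup_empty]
    have hsup : Y j ω * Z' j ω ≤ ⨆ k ∈ Finset.Icc 1 (N ω), Y k ω * Z' k ω := by
      have h1 : (⨆ (_ : j ∈ Finset.Icc 1 (N ω)), Y j ω * Z' j ω) = Y j ω * Z' j ω :=
        ciSup_pos hjN
      rw [← h1]
      exact le_ciSup hbdd j
    show x < (N ω : ℝ) * ⨆ k ∈ Finset.Icc 1 (N ω), Y k ω * Z' k ω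
    have h2 : ((m + 1 : ℕ) : ℝ) ≤ (N ω : ℝ) := by exact_mod_cast hNge
    have h3 : ((m + 1 : ℕ) : ℝ) * (Y j ω * Z' j ω) ≤ (N ω : ℝ) * (Y j ω * Z' j ω) :=
      mul_le_mul_of_nonneg_right h2 hvpos.le
    have h4 : (N ω : ℝ) * (Y j ω * Z' j ω)
        ≤ (N ω : ℝ) * ⨆ k ∈ Finset.Icc 1 (N ω), Y k ω * Z' k ω :=
      mul_le_mul_of_nonneg_left hsup (Nat.cast_nonneg _)
    linarith
  have hRbound : ∑' m, P (Tm m ∩ NN (m + 1)) ≤ P R := by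
    have h1 := tsum_le_measure_iUnion P Tm (fun m => Tm m ∩ NN (m + 1))
      (fun m => (hEms (m + 1)).diff (hEms m)) hTdisj (fun m => inter_subset_left)
    refine h1.trans ?_
    have h2 : (⋃ m, Tm m ∩ NN (m + 1)) ⊆ R ∪ {ω | ¬ (fun k => Z' k ω) = Z''vec ω} :=
      iUnion_subset hRsub
    calc P (⋃ m, Tm m ∩ NN (m + 1))
        ≤ P (R ∪ {ω | ¬ (fun k => Z' k ω) = Z''vec ω}) := measure_mono h2
      _ ≤ P R + P {ω | ¬ (fun k => Z' k ω) = Z''vec ω} := measure_union_le _ _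
      _ = P R := by rw [hbad, add_zero]
  -- per-index quantities
  set a : ℕ → ℝ≥0∞ := fun m => P ((SSum Y Z x (m + 1) \ SSum Y Z x m) ∩ NN (m + 1)) with hadef
  set b : ℕ → ℝ≥0∞ := fun m => P (Tm m ∩ NN (m + 1)) with hbdef
  have haeq : ∀ m, a m = (P.restrict (NN (m + 1))) (SSum Y Z x (m + 1) \ SSum Y Z x m) := by
    intro m
    rw [Measure.restrict_apply ((hSSms (m + 1)).diff (hSSms m))]
  have hbeq : ∀ m, b m = (P.restrict (NN (m + 1))) (Tm m) := by
    intro m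
    rw [Measure.restrict_apply ((hEms (m + 1)).diff (hEms m))]
  have hR1 : ∀ m, ((P.restrict (NN (m + 1))) (SSum Y Z x (m + 1))).toReal
      = (a m).toReal + ((P.restrict (NN (m + 1))) (SSum Y Z x m)).toReal := by
    intro m
    haveI : IsFiniteMeasure (P.restrict (NN (m + 1))) := inferInstance
    have hsub : SSum Y Z x m ⊆ SSum Y Z x (m + 1) := SSum_mono (x := x) Y Z hYpos hZpos m
    have hdecomp : SSum Y Z x (m + 1)
        = (SSum Y Z x (m + 1) \ SSum Y Z x m) ∪ SSum Y Z x m :=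
      (diff_union_of_subset hsub).symm
    have hdisj : Disjoint (SSum Y Z x (m + 1) \ SSum Y Z x m) (SSum Y Z x m) :=
      disjoint_sdiff_left
    rw [haeq m]
    conv_lhs => rw [hdecomp]
    rw [measure_union hdisj (hSSms m),
      ENNReal.toReal_add (measure_ne_top _ _) (measure_ne_top _ _)]
  have hR2 : ∀ m, ((P.restrict (NN (m + 1))) (E (m + 1))).toReal
      = (b m).toReal + ((P.restrict (NN (m + 1))) (E m)).toReal := by
    intro m
    haveI : IsFiniteMeasure (P.restrict (NN (m + 1))) := inferInstance
    have hsub : E m ⊆ E (m + 1) := hEmono (Nat.le_succ m)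
    have hdecomp : E (m + 1) = (E (m + 1) \ E m) ∪ E m := (diff_union_of_subset hsub).symm
    have hdisj : Disjoint (E (m + 1) \ E m) (E m) := disjoint_sdiff_left
    rw [hbeq m]
    conv_lhs => rw [hdecomp]
    rw [measure_union hdisj (hEms m),
      ENNReal.toReal_add (measure_ne_top _ _) (measure_ne_top _ _)]
  -- induction
  have hE0 : E 0 = (∅ : Set Ω) := by
    simp only [hEdef]
    rw [GS_zero (x := x) (n := 0) Y Z'', compl_univ]
  have hInd : ∀ M : ℕ, (∑ m ∈ Finset.range M, (a m).toReal)
        + 2 * ((P.restrict (NN (M + 1))) (E M)).toReal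
      ≤ 2 * (∑ m ∈ Finset.range M, (b m).toReal)
        + ((P.restrict (NN (M + 1))) (SSum Y Z x M)).toReal := by
    intro M
    induction M with
    | zero =>
      simp [hE0, SSum_zero (x := x) Y Z hx]
    | succ M ih =>
      have h1 := hR1 M
      have h2 := hR2 M
      have h3 := hI3 (M + 1) (M + 1)
      rw [Finset.sum_range_succ, Finset.sum_range_succ]
      linarith
  have hfinalR : ∀ M, (∑ m ∈ Finset.range M, (a m).toReal)
      ≤ 2 * ∑ m ∈ Finset.range M, (b m).toReal := by
    intro M
    have h1 := hInd M
    have h2 := hI1 M (M + 1)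
    linarith
  -- back to ENNReal
  have hane : ∀ m, a m ≠ ∞ := fun m => measure_ne_top P _
  have hbne : ∀ m, b m ≠ ∞ := fun m => measure_ne_top P _
  have hmain : ∑' m, a m ≤ 2 * ∑' m, b m := by
    rw [ENNReal.tsum_eq_iSup_sum]
    refine iSup_le fun s => ?_
    obtain ⟨M, hM⟩ := s.exists_nat_subset_range
    have hstep1 : ∑ m ∈ s, a m ≤ ∑ m ∈ Finset.range M, a m :=
      Finset.sum_le_sum_of_subset hM
    have hfa : (∑ m ∈ Finset.range M, a m) ≠ ∞ := by
      refine (ENNReal.sum_lt_top.mpr fun m _ => ?_).ne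
      exact (hane m).lt_top
    have hfb : (2 * ∑ m ∈ Finset.range M, b m) ≠ ∞ := by
      refine ENNReal.mul_ne_top (by norm_num) ?_
      refine (ENNReal.sum_lt_top.mpr fun m _ => ?_).ne
      exact (hbne m).lt_top
    have hstep2 : ∑ m ∈ Finset.range M, a m ≤ 2 * ∑ m ∈ Finset.range M, b m := by
      rw [← ENNReal.toReal_le_toReal hfa hfb]
      rw [ENNReal.toReal_sum (fun m _ => hane m), ENNReal.toReal_mul,
        ENNReal.toReal_sum (fun m _ => hbne m)]
      simpa using hfinalR M
    refine hstep1.trans (hstep2.trans ?_)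
    exact mul_le_mul_right (ENNReal.sum_le_tsum _) 2
  calc P L ≤ ∑' m, a m := hLbound
    _ ≤ 2 * ∑' m, b m := hmain
    _ ≤ 2 * P R := mul_le_mul_right hRbound 2
end

section
/- Let (E, ρ) be a metric space and let X, Y be E-valued random elements and (a_n) a positive sequence with a_n → ∞. Suppose that for every δ > 0 there exists c(δ) ∈ (0,∞) with lim_n n P(ρ(X, x_0) > a_n δ) = c(δ), where x_0 ∈ E is fixed, that c is continuous, and that for all ε > 0, P(ρ(X,Y) > a_n ε | ρ(Y, x_0) > a_n δ) → 0 and P(ρ(X,Y) > a_n ε | ρ(X, x_0) > a_n δ) → 0. Then for every δ > 0, lim_n n P(ρ(Y, x_0) > a_n δ) = c(δ). -/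
open MeasureTheory Filter Topology

private lemma tail_incl_upper {Ω E : Type*} [MetricSpace E] (X Y : Ω → E) (x0 : E) (A B : ℝ) :
    {ω | A + B < dist (Y ω) x0} ⊆
      {ω | A < dist (X ω) x0} ∪ ({ω | B < dist (X ω) (Y ω)} ∩ {ω | A + B < dist (Y ω) x0}) := by
  intro ω hω
  simp only [Set.mem_setOf_eq, Set.mem_union, Set.mem_inter_iff] at *
  by_cases h : B < dist (X ω) (Y ω)
  · exact Or.inr ⟨h, hω⟩
  · push_neg at h
    have h2 := dist_triangle (Y ω) (X ω) x0
    rw [dist_comm (Y ω) (X ω)] at h2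
    left; linarith

private lemma tail_incl_lower {Ω E : Type*} [MetricSpace E] (X Y : Ω → E) (x0 : E) (A B : ℝ) :
    {ω | A + B < dist (X ω) x0} ⊆
      {ω | A < dist (Y ω) x0} ∪ ({ω | B < dist (X ω) (Y ω)} ∩ {ω | A + B < dist (X ω) x0}) := by
  intro ω hω
  simp only [Set.mem_setOf_eq, Set.mem_union, Set.mem_inter_iff] at *
  by_cases h : B < dist (X ω) (Y ω)
  · exact Or.inr ⟨h, hω⟩
  · push_neg at h
    have h2 := dist_triangle (X ω) (Y ω) x0
    left; linarith

/-- Abstract tail equivalence under asymptotic closeness (Theorem 3.2 core):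
if `X` has tail rates `n P(ρ(X,x₀) > a_n δ) → c(δ)` with `c` continuous and
positive on `(0,∞)`, and `X` and `Y` are asymptotically close in the sense
of conditional probabilities, then `Y` has the same tail rates. -/
theorem tail_equivalence_of_asymptotically_close
    {Ω E : Type*} [MeasurableSpace Ω] {P : Measure Ω} [IsProbabilityMeasure P]
    [MetricSpace E] (X Y : Ω → E) (x0 : E)
    (a : ℕ → ℝ) (hapos : ∀ n, 0 < a n) (hatop : Tendsto a atTop atTop)
    (c : ℝ → ℝ) (hc : ContinuousOn c (Set.Ioi 0)) (hcpos : ∀ δ : ℝ, 0 < δ → 0 < c δ)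
    (hX : ∀ δ : ℝ, 0 < δ →
      Tendsto (fun n : ℕ => (n : ℝ) * (P {ω | a n * δ < dist (X ω) x0}).toReal)
        atTop (nhds (c δ)))
    (h1 : ∀ ε δ : ℝ, 0 < ε → 0 < δ →
      Tendsto (fun n : ℕ =>
          (P ({ω | a n * ε < dist (X ω) (Y ω)} ∩ {ω | a n * δ < dist (Y ω) x0})).toReal
            / (P {ω | a n * δ < dist (Y ω) x0}).toReal)
        atTop (nhds 0))
    (h2 : ∀ ε δ : ℝ, 0 < ε → 0 < δ →
      Tendsto (fun n : ℕ =>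
          (P ({ω | a n * ε < dist (X ω) (Y ω)} ∩ {ω | a n * δ < dist (X ω) x0})).toReal
            / (P {ω | a n * δ < dist (X ω) x0}).toReal)
        atTop (nhds 0)) :
    ∀ δ : ℝ, 0 < δ →
      Tendsto (fun n : ℕ => (n : ℝ) * (P {ω | a n * δ < dist (Y ω) x0}).toReal)
        atTop (nhds (c δ)) := by
  intro δ hδ
  -- real-valued tail quantities
  set u : ℕ → ℝ := fun n => (n : ℝ) * (P {ω | a n * δ < dist (Y ω) x0}).toReal with hu
  have hu_nonneg : ∀ n, 0 ≤ u n := fun n =>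
    mul_nonneg (Nat.cast_nonneg n) ENNReal.toReal_nonneg
  -- generic: P(A∩B).toReal = (ratio) * P(B).toReal
  have rid : ∀ (A B : Set Ω),
      (P (A ∩ B)).toReal = ((P (A ∩ B)).toReal / (P B).toReal) * (P B).toReal := by
    intro A B
    rcases eq_or_ne ((P B).toReal) 0 with h | h
    · have hB : P B = 0 := by
        rcases (ENNReal.toReal_eq_zero_iff _).mp h with h' | h'
        · exact h'
        · exact absurd h' (measure_ne_top P B)
      have hAB : P (A ∩ B) = 0 :=
        le_antisymm (hB ▸ measure_mono Set.inter_subset_right) zero_le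
      simp [hAB, h]
    · field_simp
  -- toReal subadditivity
  have toReal_union : ∀ (A B : Set Ω),
      (P (A ∪ B)).toReal ≤ (P A).toReal + (P B).toReal := by
    intro A B
    have h3 : P (A ∪ B) ≤ P A + P B := measure_union_le _ _
    have h4 : (P (A ∪ B)).toReal ≤ (P A + P B).toReal :=
      ENNReal.toReal_mono (ENNReal.add_ne_top.mpr ⟨measure_ne_top P A, measure_ne_top P B⟩) h3
    rwa [ENNReal.toReal_add (measure_ne_top P A) (measure_ne_top P B)] at h4
  -- upper key inequality
  have hup : ∀ ε : ℝ, ∀ n : ℕ,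
      u n ≤ (n : ℝ) * (P {ω | a n * (δ - ε) < dist (X ω) x0}).toReal
        + ((P ({ω | a n * ε < dist (X ω) (Y ω)} ∩ {ω | a n * δ < dist (Y ω) x0})).toReal
            / (P {ω | a n * δ < dist (Y ω) x0}).toReal) * u n := by
    intro ε n
    have hs : {ω | a n * δ < dist (Y ω) x0}
        = {ω | a n * (δ - ε) + a n * ε < dist (Y ω) x0} := by
      have : a n * δ = a n * (δ - ε) + a n * ε := by ring
      rw [this]
    have hsub := tail_incl_upper X Y x0 (a n * (δ - ε)) (a n * ε)
    rw [← hs] at hsub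
    have hle : (P {ω | a n * δ < dist (Y ω) x0}).toReal ≤
        (P {ω | a n * (δ - ε) < dist (X ω) x0}).toReal
          + (P ({ω | a n * ε < dist (X ω) (Y ω)} ∩ {ω | a n * δ < dist (Y ω) x0})).toReal := by
      calc (P {ω | a n * δ < dist (Y ω) x0}).toReal
          ≤ (P ({ω | a n * (δ - ε) < dist (X ω) x0}
              ∪ ({ω | a n * ε < dist (X ω) (Y ω)} ∩ {ω | a n * δ < dist (Y ω) x0}))).toReal :=
            ENNReal.toReal_mono (measure_ne_top P _) (measure_mono hsub)
        _ ≤ _ := toReal_union _ _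
    have hmul : u n ≤ (n : ℝ) * (P {ω | a n * (δ - ε) < dist (X ω) x0}).toReal
        + (n : ℝ) * (P ({ω | a n * ε < dist (X ω) (Y ω)}
            ∩ {ω | a n * δ < dist (Y ω) x0})).toReal := by
      rw [hu, ← mul_add]
      exact mul_le_mul_of_nonneg_left hle (Nat.cast_nonneg n)
    calc u n ≤ _ := hmul
      _ = (n : ℝ) * (P {ω | a n * (δ - ε) < dist (X ω) x0}).toReal
            + ((P ({ω | a n * ε < dist (X ω) (Y ω)} ∩ {ω | a n * δ < dist (Y ω) x0})).toReal
              / (P {ω | a n * δ < dist (Y ω) x0}).toReal) * u n := by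
          simp only [hu]
          linear_combination (n : ℝ) * rid ({ω | a n * ε < dist (X ω) (Y ω)}) ({ω | a n * δ < dist (Y ω) x0})
  -- lower key inequality
  have hlow : ∀ ε : ℝ, ∀ n : ℕ,
      (n : ℝ) * (P {ω | a n * (δ + ε) < dist (X ω) x0}).toReal ≤
        u n + ((P ({ω | a n * ε < dist (X ω) (Y ω)} ∩ {ω | a n * (δ + ε) < dist (X ω) x0})).toReal
            / (P {ω | a n * (δ + ε) < dist (X ω) x0}).toReal)
          * ((n : ℝ) * (P {ω | a n * (δ + ε) < dist (X ω) x0}).toReal) := by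
    intro ε n
    have hs : {ω | a n * (δ + ε) < dist (X ω) x0}
        = {ω | a n * δ + a n * ε < dist (X ω) x0} := by
      have : a n * (δ + ε) = a n * δ + a n * ε := by ring
      rw [this]
    have hsub := tail_incl_lower X Y x0 (a n * δ) (a n * ε)
    rw [← hs] at hsub
    have hle : (P {ω | a n * (δ + ε) < dist (X ω) x0}).toReal ≤
        (P {ω | a n * δ < dist (Y ω) x0}).toReal
          + (P ({ω | a n * ε < dist (X ω) (Y ω)}
              ∩ {ω | a n * (δ + ε) < dist (X ω) x0})).toReal := by
      calc (P {ω | a n * (δ + ε) < dist (X ω) x0}).toReal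
          ≤ (P ({ω | a n * δ < dist (Y ω) x0}
              ∪ ({ω | a n * ε < dist (X ω) (Y ω)}
                ∩ {ω | a n * (δ + ε) < dist (X ω) x0}))).toReal :=
            ENNReal.toReal_mono (measure_ne_top P _) (measure_mono hsub)
        _ ≤ _ := toReal_union _ _
    have hmul : (n : ℝ) * (P {ω | a n * (δ + ε) < dist (X ω) x0}).toReal ≤
        (n : ℝ) * (P {ω | a n * δ < dist (Y ω) x0}).toReal
          + (n : ℝ) * (P ({ω | a n * ε < dist (X ω) (Y ω)}
              ∩ {ω | a n * (δ + ε) < dist (X ω) x0})).toReal := by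
      rw [← mul_add]
      exact mul_le_mul_of_nonneg_left hle (Nat.cast_nonneg n)
    calc (n : ℝ) * (P {ω | a n * (δ + ε) < dist (X ω) x0}).toReal ≤ _ := hmul
      _ = u n + ((P ({ω | a n * ε < dist (X ω) (Y ω)}
              ∩ {ω | a n * (δ + ε) < dist (X ω) x0})).toReal
            / (P {ω | a n * (δ + ε) < dist (X ω) x0}).toReal)
          * ((n : ℝ) * (P {ω | a n * (δ + ε) < dist (X ω) x0}).toReal) := by
          simp only [hu]
          linear_combination (n : ℝ) * rid ({ω | a n * ε < dist (X ω) (Y ω)}) ({ω | a n * (δ + ε) < dist (X ω) x0})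
  -- boundedness of u
  obtain ⟨M, hM⟩ : ∃ M : ℝ, M = 2 * (c (δ / 2) + 1) := ⟨_, rfl⟩
  have hMpos : 0 < M := by
    have := hcpos (δ / 2) (by linarith)
    rw [hM]; linarith
  have hbound : ∀ᶠ n in atTop, u n ≤ M := by
    have hXhalf := hX (δ / 2) (by linarith)
    have hV : ∀ᶠ n : ℕ in atTop,
        (n : ℝ) * (P {ω | a n * (δ / 2) < dist (X ω) x0}).toReal ≤ c (δ / 2) + 1 := by
      have := (hXhalf.eventually (eventually_le_nhds (lt_add_one (c (δ / 2)))))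
      exact this
    have hR := (h1 (δ / 2) δ (by linarith) hδ).eventually
      (eventually_le_nhds (by norm_num : (0 : ℝ) < 1 / 2))
    filter_upwards [hV, hR] with n hVn hRn
    have key := hup (δ / 2) n
    have heq : δ - δ / 2 = δ / 2 := by ring
    rw [heq] at key
    have hr0 : ((P ({ω | a n * (δ / 2) < dist (X ω) (Y ω)}
          ∩ {ω | a n * δ < dist (Y ω) x0})).toReal
        / (P {ω | a n * δ < dist (Y ω) x0}).toReal) * u n ≤ (1 / 2) * u n :=
      mul_le_mul_of_nonneg_right hRn (hu_nonneg n)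
    nlinarith [hu_nonneg n]
  -- final epsilon argument
  rw [Metric.tendsto_nhds]
  intro η hη
  -- continuity of c at δ within Ioi 0
  have hcd := hc δ (Set.mem_Ioi.mpr hδ)
  rw [Metric.continuousWithinAt_iff] at hcd
  obtain ⟨ε₀, hε₀pos, hε₀⟩ := hcd (η / 4) (by linarith)
  set ε : ℝ := min ε₀ δ / 2 with hε
  have hεpos : 0 < ε := by
    rw [hε]; positivity
  have hεltδ : ε < δ := by
    rw [hε]
    have : min ε₀ δ ≤ δ := min_le_right _ _
    linarith
  have hεltε₀ : ε < ε₀ := by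
    rw [hε]
    have : min ε₀ δ ≤ ε₀ := min_le_left _ _
    linarith
  have hcm : dist (c (δ - ε)) (c δ) < η / 4 := by
    apply hε₀ (Set.mem_Ioi.mpr (by linarith))
    rw [Real.dist_eq]
    rw [abs_of_nonpos (by linarith)]
    linarith
  have hcp : dist (c (δ + ε)) (c δ) < η / 4 := by
    apply hε₀ (Set.mem_Ioi.mpr (by linarith))
    rw [Real.dist_eq]
    rw [abs_of_nonneg (by linarith)]
    linarith
  rw [Real.dist_eq] at hcm hcp
  -- eventual facts
  have hVup : ∀ᶠ n : ℕ in atTop,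
      |(n : ℝ) * (P {ω | a n * (δ - ε) < dist (X ω) x0}).toReal - c (δ - ε)| < η / 4 := by
    have := (hX (δ - ε) (by linarith))
    rw [Metric.tendsto_nhds] at this
    simpa [Real.dist_eq] using this (η / 4) (by linarith)
  have hRup : ∀ᶠ n in atTop,
      ((P ({ω | a n * ε < dist (X ω) (Y ω)} ∩ {ω | a n * δ < dist (Y ω) x0})).toReal
        / (P {ω | a n * δ < dist (Y ω) x0}).toReal) < η / (4 * M) := by
    have := h1 ε δ hεpos hδ
    exact this.eventually (eventually_lt_nhds (by positivity))
  obtain ⟨C, hC⟩ : ∃ C : ℝ, C = c (δ + ε) + η / 4 := ⟨_, rfl⟩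
  have hCpos : 0 < C := by
    have := hcpos (δ + ε) (by linarith)
    rw [hC]; linarith
  have hWlow : ∀ᶠ n : ℕ in atTop,
      |(n : ℝ) * (P {ω | a n * (δ + ε) < dist (X ω) x0}).toReal - c (δ + ε)| < η / 4 := by
    have := (hX (δ + ε) (by linarith))
    rw [Metric.tendsto_nhds] at this
    simpa [Real.dist_eq] using this (η / 4) (by linarith)
  have hSlow : ∀ᶠ n in atTop,
      ((P ({ω | a n * ε < dist (X ω) (Y ω)} ∩ {ω | a n * (δ + ε) < dist (X ω) x0})).toReal
        / (P {ω | a n * (δ + ε) < dist (X ω) x0}).toReal) < η / (4 * C) := by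
    have := h2 ε (δ + ε) hεpos (by linarith)
    exact this.eventually (eventually_lt_nhds (by positivity))
  filter_upwards [hbound, hVup, hRup, hWlow, hSlow] with n hBn hVn hRn hWn hSn
  rw [Real.dist_eq]
  obtain ⟨U, hUdef⟩ : ∃ x : ℝ, x = u n := ⟨_, rfl⟩
  obtain ⟨v, hvdef⟩ : ∃ x : ℝ,
      x = (n : ℝ) * (P {ω | a n * (δ - ε) < dist (X ω) x0}).toReal := ⟨_, rfl⟩
  obtain ⟨r, hrdef⟩ : ∃ x : ℝ,
      x = (P ({ω | a n * ε < dist (X ω) (Y ω)} ∩ {ω | a n * δ < dist (Y ω) x0})).toReal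
        / (P {ω | a n * δ < dist (Y ω) x0}).toReal := ⟨_, rfl⟩
  obtain ⟨w, hwdef⟩ : ∃ x : ℝ,
      x = (n : ℝ) * (P {ω | a n * (δ + ε) < dist (X ω) x0}).toReal := ⟨_, rfl⟩
  obtain ⟨sv, hsdef⟩ : ∃ x : ℝ,
      x = (P ({ω | a n * ε < dist (X ω) (Y ω)} ∩ {ω | a n * (δ + ε) < dist (X ω) x0})).toReal
        / (P {ω | a n * (δ + ε) < dist (X ω) x0}).toReal := ⟨_, rfl⟩
  rw [← hUdef] at hBn
  rw [← hvdef] at hVn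
  rw [← hrdef] at hRn
  rw [← hwdef] at hWn
  rw [← hsdef] at hSn
  have hr_nonneg : 0 ≤ r := hrdef ▸ div_nonneg ENNReal.toReal_nonneg ENNReal.toReal_nonneg
  have hs_nonneg : 0 ≤ sv := hsdef ▸ div_nonneg ENNReal.toReal_nonneg ENNReal.toReal_nonneg
  have hU_nonneg : 0 ≤ U := hUdef ▸ hu_nonneg n
  have key1 : U ≤ v + r * U := by rw [hUdef, hvdef, hrdef]; exact hup ε n
  have key2 : w ≤ U + sv * w := by rw [hUdef, hwdef, hsdef]; exact hlow ε n
  rw [← hUdef]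
  have habsV := abs_lt.mp hVn
  have habcm := abs_lt.mp hcm
  have habsW := abs_lt.mp hWn
  have habcp := abs_lt.mp hcp
  have hrU : r * U ≤ r * M := mul_le_mul_of_nonneg_left hBn hr_nonneg
  have hrM2 : r * M < (η / (4 * M)) * M := mul_lt_mul_of_pos_right hRn hMpos
  have hrM3 : (η / (4 * M)) * M = η / 4 := by field_simp
  have hwC : w ≤ C := by rw [hC]; linarith [habsW.2]
  have hsw : sv * w ≤ sv * C := mul_le_mul_of_nonneg_left hwC hs_nonneg
  have hsw2 : sv * C < (η / (4 * C)) * C := mul_lt_mul_of_pos_right hSn hCpos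
  have hsw3 : (η / (4 * C)) * C = η / 4 := by field_simp
  rw [abs_lt]
  constructor <;> linarith
end

section
/- Let X be a nonnegative random variable that is regularly varying with index α > 0 (P(X > x) = x^{-α}L(x), L slowly varying) and let Y be a nonnegative random variable, independent of X, with E[Y^{α+δ}] < ∞ for some δ > 0 and P(Y > 0) > 0. Then YX is regularly varying with index α, i.e. P(YX > x) = x^{-α} L̃(x) for some slowly varying L̃. -/
open MeasureTheory ProbabilityTheory Filter Topology

set_option maxHeartbeats 1000000

private lemma potter_aux {T : ℝ → ℝ} {x₀ β : ℝ} (hT : Antitone T)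
    (hTnn : ∀ x, 0 ≤ T x) (hx₀ : 1 ≤ x₀) (hβ : 0 ≤ β)
    (hdb : ∀ x, x₀ ≤ x → (2:ℝ) ^ (-β) * T x ≤ T (2 * x)) :
    ∀ u s : ℝ, x₀ ≤ u → 1 ≤ s → (2*s) ^ (-β) * T u ≤ T (u * s) := by
  have chain : ∀ n : ℕ, ∀ u : ℝ, x₀ ≤ u → ((2:ℝ)^n) ^ (-β) * T u ≤ T (2^n * u) := by
    intro n
    induction n with
    | zero => intro u hu; simp
    | succ n ih =>
      intro u hu
      have h2n : (1:ℝ) ≤ 2^n := one_le_pow₀ (by norm_num)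
      have hun : x₀ ≤ 2^n * u := by nlinarith
      have e : (2:ℝ)^(n+1) * u = 2 * (2^n * u) := by ring
      calc ((2:ℝ)^(n+1)) ^ (-β) * T u
          = (2:ℝ)^(-β) * (((2:ℝ)^n)^(-β) * T u) := by
            rw [pow_succ, Real.mul_rpow (by positivity) (by norm_num)]; ring
        _ ≤ (2:ℝ)^(-β) * T (2^n * u) :=
            mul_le_mul_of_nonneg_left (ih u hu) (Real.rpow_nonneg (by norm_num) _)
        _ ≤ T (2 * (2^n * u)) := hdb _ hun
        _ = T (2^(n+1) * u) := by rw [e]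
  intro u s hu hs
  have hu0 : 0 < u := lt_of_lt_of_le (lt_of_lt_of_le one_pos hx₀) hu
  have hs0 : 0 < s := lt_of_lt_of_le one_pos hs
  set n := ⌊Real.logb 2 s⌋₊ with hn
  have hlb : 0 ≤ Real.logb 2 s := Real.logb_nonneg one_lt_two hs
  have h1 : (2:ℝ)^n ≤ s := by
    calc (2:ℝ)^n = (2:ℝ) ^ ((n:ℝ)) := (Real.rpow_natCast 2 n).symm
      _ ≤ (2:ℝ) ^ Real.logb 2 s :=
          Real.rpow_le_rpow_of_exponent_le one_le_two (Nat.floor_le hlb)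
      _ = s := Real.rpow_logb two_pos (by norm_num) hs0
  have h2' : s ≤ (2:ℝ)^(n+1) := by
    calc s = (2:ℝ) ^ Real.logb 2 s := (Real.rpow_logb two_pos (by norm_num) hs0).symm
      _ ≤ (2:ℝ) ^ (((n:ℝ))+1) :=
          Real.rpow_le_rpow_of_exponent_le one_le_two (Nat.lt_floor_add_one _).le
      _ = (2:ℝ)^(n+1) := by rw [← Real.rpow_natCast 2 (n+1)]; push_cast; ring_nf
  have hmono : T (2^(n+1) * u) ≤ T (u * s) := hT (by nlinarith)
  calc (2*s)^(-β) * T u ≤ ((2:ℝ)^(n+1))^(-β) * T u := by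
        apply mul_le_mul_of_nonneg_right _ (hTnn u)
        apply Real.rpow_le_rpow_of_nonpos (by positivity) (by rw [pow_succ]; nlinarith)
          (by linarith)
    _ ≤ T (2^(n+1) * u) := chain (n+1) u hu
    _ ≤ T (u * s) := hmono

/-- Consequence of Breiman's theorem: the product `YX` of a regularly varying
`X` of index `α` with an independent `Y` having a finite `(α+δ)`-moment and
`P(Y > 0) > 0` is again regularly varying of index `α`. -/
theorem breiman_product_regularly_varying
    {Ω : Type*} [MeasurableSpace Ω] {P : Measure Ω} [IsProbabilityMeasure P]
    (X Y : Ω → ℝ) (hXm : Measurable X) (hYm : Measurable Y)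
    (hindep : IndepFun Y X P)
    (hXpos : ∀ ω, 0 ≤ X ω) (hYpos : ∀ ω, 0 ≤ Y ω)
    (α : ℝ) (hα : 0 < α) (L : ℝ → ℝ) (hLpos : ∀ x : ℝ, 0 < x → 0 < L x)
    (hL : SlowlyVarying L)
    (htail : ∀ x : ℝ, 0 < x → (P {ω | x < X ω}).toReal = x ^ (-α) * L x)
    (δ : ℝ) (hδ : 0 < δ)
    (hmom : Integrable (fun ω => Y ω ^ (α + δ)) P)
    (hYpos' : 0 < P {ω | 0 < Y ω}) :
    ∃ L' : ℝ → ℝ, SlowlyVarying L' ∧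
      ∀ x : ℝ, 0 < x → (P {ω | x < Y ω * X ω}).toReal = x ^ (-α) * L' x := by
  set ν : Measure ℝ := P.map Y with hνdef
  set T : ℝ → ℝ := fun x => (P {ω | x < X ω}).toReal with hTdef
  -- basic facts about the tail function T
  have hTanti : Antitone T := by
    intro a b hab
    exact ENNReal.toReal_mono (measure_ne_top P _)
      (measure_mono (fun ω hω => lt_of_le_of_lt hab hω))
  have hTnn : ∀ x, 0 ≤ T x := fun x => ENNReal.toReal_nonneg
  have hTle1 : ∀ x, T x ≤ 1 := by
    intro x
    calc T x ≤ (P Set.univ).toReal :=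
          ENNReal.toReal_mono (measure_ne_top _ _) (measure_mono (Set.subset_univ _))
      _ = 1 := by simp
  have hTpos : ∀ x, 0 < x → 0 < T x := by
    intro x hx
    rw [show T x = x ^ (-α) * L x from htail x hx]
    exact mul_pos (Real.rpow_pos_of_pos hx _) (hLpos x hx)
  have hTmeas : Measurable T := hTanti.measurable
  -- ratio limits
  have hratio : ∀ c : ℝ, 0 < c →
      Tendsto (fun x => T (c*x) / T x) atTop (nhds (c ^ (-α))) := by
    intro c hc
    have h1 := (hL c hc).const_mul (c ^ (-α))
    rw [mul_one] at h1
    apply h1.congr'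
    filter_upwards [eventually_gt_atTop 0] with x hx
    have hcx : 0 < c * x := mul_pos hc hx
    rw [show T (c*x) = (c*x) ^ (-α) * L (c*x) from htail _ hcx,
      show T x = x ^ (-α) * L x from htail _ hx, Real.mul_rpow hc.le hx.le]
    have hx0 : x ^ (-α) ≠ 0 := (Real.rpow_pos_of_pos hx _).ne'
    have hLx : L x ≠ 0 := (hLpos x hx).ne'
    field_simp
  -- doubling bound and Potter-type bound
  have hβ0 : (0:ℝ) < α + δ/2 := by linarith
  have hlt : (2:ℝ) ^ (-(α + δ/2)) < 2 ^ (-α) :=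
    Real.rpow_lt_rpow_of_exponent_lt one_lt_two (by linarith)
  obtain ⟨x₁, hx₁⟩ := eventually_atTop.mp ((hratio 2 two_pos).eventually_const_le hlt)
  set x₀ : ℝ := max x₁ 1 with hx₀def
  have hx₀1 : 1 ≤ x₀ := le_max_right _ _
  have hx₀pos : 0 < x₀ := lt_of_lt_of_le one_pos hx₀1
  have hdb : ∀ x, x₀ ≤ x → (2:ℝ) ^ (-(α + δ/2)) * T x ≤ T (2 * x) := by
    intro x hx
    have hxpos : 0 < x := lt_of_lt_of_le hx₀pos hx
    have h := hx₁ x (le_trans (le_max_left _ _) hx)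
    rw [le_div_iff₀ (hTpos x hxpos)] at h
    linarith
  have hpotter := potter_aux hTanti hTnn hx₀1 hβ0.le hdb
  -- facts about ν = law of Y
  have hνprob : IsProbabilityMeasure ν := Measure.isProbabilityMeasure_map hYm.aemeasurable
  have hνae : ∀ᵐ y ∂ν, 0 ≤ y := by
    rw [hνdef]
    exact (ae_map_iff hYm.aemeasurable (measurableSet_Ici (a := (0:ℝ)))).mpr
      (Eventually.of_forall hYpos)
  have hmomν : Integrable (fun y => |y| ^ (α+δ)) ν := by
    rw [hνdef, integrable_map_measure ?_ hYm.aemeasurable]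
    · exact hmom.congr (Eventually.of_forall fun ω => by
        simp [Function.comp, abs_of_nonneg (hYpos ω)])
    · exact (by fun_prop : Measurable fun y : ℝ => |y| ^ (α+δ)).aestronglyMeasurable
  set M := ∫ y, |y| ^ (α+δ) ∂ν with hMdef
  have hM0 : 0 ≤ M := integral_nonneg fun y => Real.rpow_nonneg (abs_nonneg _) _
  -- the limit integrand φ and the limit m = E[Y^α]
  set φ : ℝ → ℝ := fun y => if 0 < y then y ^ α else 0 with hφdef
  have hφnn : ∀ y, 0 ≤ φ y := by
    intro y
    by_cases h : 0 < y
    · simp only [hφdef, if_pos h]; exact Real.rpow_nonneg h.le _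
    · simp [hφdef, h]
  have hφmeas : Measurable φ :=
    Measurable.ite measurableSet_Ioi (by fun_prop) measurable_const
  have hφbound : ∀ y, 0 ≤ y → φ y ≤ 1 + |y|^(α+δ) := by
    intro y hy
    by_cases h : 0 < y
    · simp only [hφdef, if_pos h]
      rcases le_or_gt y 1 with h1 | h1
      · have h2 : y ^ α ≤ 1 := Real.rpow_le_one hy h1 hα.le
        have h3 : (0:ℝ) ≤ |y|^(α+δ) := Real.rpow_nonneg (abs_nonneg _) _
        linarith
      · have h2 : y ^ α ≤ y ^ (α+δ) :=
          Real.rpow_le_rpow_of_exponent_le h1.le (by linarith)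
        rw [abs_of_pos h]
        linarith
    · simp only [hφdef, if_neg h]
      have : (0:ℝ) ≤ |y|^(α+δ) := Real.rpow_nonneg (abs_nonneg _) _
      linarith
  have hφint : Integrable φ ν := by
    refine ((integrable_const (1:ℝ)).add hmomν).mono' hφmeas.aestronglyMeasurable ?_
    filter_upwards [hνae] with y hy
    rw [Real.norm_eq_abs, abs_of_nonneg (hφnn y)]
    exact hφbound y hy
  set m := ∫ y, φ y ∂ν with hmdef
  have hm0 : 0 < m := by
    rcases lt_or_eq_of_le (integral_nonneg (show 0 ≤ φ from hφnn)) with h | h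
    · exact h
    · exfalso
      have hz : φ =ᵐ[ν] 0 :=
        (integral_eq_zero_iff_of_nonneg (fun y => hφnn y) hφint).mp h.symm
      have hsub : {y : ℝ | 0 < y} ⊆ {y | ¬ φ y = 0} := by
        intro y hy
        simp only [Set.mem_setOf_eq, hφdef]
        rw [if_pos (show 0 < y from hy)]
        exact (Real.rpow_pos_of_pos hy _).ne'
      have h0 : ν {y : ℝ | 0 < y} = 0 := measure_mono_null hsub (ae_iff.mp hz)
      rw [show {y:ℝ | 0 < y} = Set.Ioi 0 from rfl, hνdef,
        Measure.map_apply hYm measurableSet_Ioi] at h0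
      exact absurd h0 hYpos'.ne'
  -- f and the Fubini identity
  set f : ℝ → ℝ → ℝ := fun x y => if 0 < y then T (x/y) else 0 with hfdef
  have hfmeas : ∀ x, Measurable (f x) := fun x =>
    Measurable.ite measurableSet_Ioi (hTmeas.comp (measurable_const.div measurable_id))
      measurable_const
  have hfnn : ∀ x y, 0 ≤ f x y := by
    intro x y; by_cases h : 0 < y <;> simp [hfdef, h, hTnn]
  have hfle1 : ∀ x y, f x y ≤ 1 := by
    intro x y; by_cases h : 0 < y <;> simp [hfdef, h, hTle1]
  have hQeq : ∀ x : ℝ, 0 < x → (P {ω | x < Y ω * X ω}).toReal = ∫ y, f x y ∂ν := by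
    intro x hx
    have hpairm : Measurable fun ω => (Y ω, X ω) := hYm.prodMk hXm
    have hS : MeasurableSet {p : ℝ × ℝ | x < p.1 * p.2} :=
      measurableSet_lt measurable_const (measurable_fst.mul measurable_snd)
    have hmap : P.map (fun ω => (Y ω, X ω)) = ν.prod (P.map X) := by
      rw [hνdef]
      exact (indepFun_iff_map_prod_eq_prod_map_map hYm.aemeasurable hXm.aemeasurable).mp hindep
    have h1 : P {ω | x < Y ω * X ω} = ∫⁻ y, (P.map X) {z | x < y * z} ∂ν := by
      have he : {ω | x < Y ω * X ω} = (fun ω => (Y ω, X ω)) ⁻¹' {p : ℝ×ℝ | x < p.1*p.2} := rfl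
      rw [he, ← Measure.map_apply hpairm hS, hmap, Measure.prod_apply hS]
      rfl
    have h2 : ∫⁻ y, (P.map X) {z | x < y * z} ∂ν = ∫⁻ y, ENNReal.ofReal (f x y) ∂ν := by
      apply lintegral_congr_ae
      filter_upwards [hνae] with y hy
      rcases lt_or_eq_of_le hy with hy0 | hy0
      · have hset : {z : ℝ | x < y * z} = Set.Ioi (x/y) := by
          ext z
          simp only [Set.mem_setOf_eq, Set.mem_Ioi]
          rw [div_lt_iff₀ hy0, mul_comm]
        rw [hset, Measure.map_apply hXm measurableSet_Ioi,
          show f x y = T (x/y) from if_pos hy0, hTdef]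
        rw [ENNReal.ofReal_toReal (measure_ne_top _ _)]
        rfl
      · rw [← hy0]
        have hz : {z : ℝ | x < 0 * z} = ∅ := by
          ext z; simp [not_lt.mpr hx.le, hx]
        rw [hz]
        simp [hfdef]
    have h3 : ∫ y, f x y ∂ν = (∫⁻ y, ENNReal.ofReal (f x y) ∂ν).toReal :=
      integral_eq_lintegral_of_nonneg_ae (Eventually.of_forall (hfnn x))
        (hfmeas x).aestronglyMeasurable
    rw [h3, ← h2, ← h1]
  -- splitting of f according to y ≤ x/x₀
  set f₁ : ℝ → ℝ → ℝ := fun x y => if y ≤ x / x₀ then f x y else 0 with hf₁def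
  set f₂ : ℝ → ℝ → ℝ := fun x y => if y ≤ x / x₀ then 0 else f x y with hf₂def
  have hf₁meas : ∀ x, Measurable (f₁ x) := fun x =>
    Measurable.ite measurableSet_Iic (hfmeas x) measurable_const
  have hf₂meas : ∀ x, Measurable (f₂ x) := fun x =>
    Measurable.ite measurableSet_Iic measurable_const (hfmeas x)
  have hf₁nn : ∀ x y, 0 ≤ f₁ x y := by
    intro x y; by_cases h : y ≤ x / x₀ <;> simp [hf₁def, h, hfnn]
  have hf₂nn : ∀ x y, 0 ≤ f₂ x y := by
    intro x y; by_cases h : y ≤ x / x₀ <;> simp [hf₂def, h, hfnn]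
  have hf₁le1 : ∀ x y, f₁ x y ≤ 1 := by
    intro x y; by_cases h : y ≤ x / x₀ <;> simp [hf₁def, h, hfle1]
  have hf₂le1 : ∀ x y, f₂ x y ≤ 1 := by
    intro x y; by_cases h : y ≤ x / x₀ <;> simp [hf₂def, h, hfle1]
  have hbdd_int : ∀ g : ℝ → ℝ, Measurable g → (∀ y, 0 ≤ g y) → (∀ y, g y ≤ 1) →
      Integrable g ν := by
    intro g hg h0 h1
    refine (integrable_const (1:ℝ)).mono' hg.aestronglyMeasurable ?_
    exact Eventually.of_forall fun y => by
      rw [Real.norm_eq_abs, abs_of_nonneg (h0 y)]; exact h1 y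
  have hint₁ : ∀ x, Integrable (f₁ x) ν := fun x =>
    hbdd_int _ (hf₁meas x) (hf₁nn x) (hf₁le1 x)
  have hint₂ : ∀ x, Integrable (f₂ x) ν := fun x =>
    hbdd_int _ (hf₂meas x) (hf₂nn x) (hf₂le1 x)
  have hsplit : ∀ x, ∫ y, f x y ∂ν = (∫ y, f₁ x y ∂ν) + ∫ y, f₂ x y ∂ν := by
    intro x
    rw [← integral_add (hint₁ x) (hint₂ x)]
    apply integral_congr_ae
    apply Eventually.of_forall
    intro y
    by_cases h : y ≤ x / x₀ <;> simp [hf₁def, hf₂def, h]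
  -- Part 1: dominated convergence for the main part
  set G : ℝ → ℝ := fun y => 2 ^ (α + δ/2) * (1 + |y| ^ (α+δ)) with hGdef
  have hGint : Integrable G ν := ((integrable_const (1:ℝ)).add hmomν).const_mul _
  have hDCT : Tendsto (fun x => ∫ y, f₁ x y / T x ∂ν) atTop (nhds m) := by
    rw [hmdef]
    apply tendsto_integral_filter_of_dominated_convergence G
    · exact Eventually.of_forall fun x => ((hf₁meas x).div_const _).aestronglyMeasurable
    · filter_upwards [eventually_ge_atTop x₀] with x hxx₀
      filter_upwards [hνae] with y hy
      have hx0 : 0 < x := lt_of_lt_of_le hx₀pos hxx₀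
      have hTx : 0 < T x := hTpos x hx0
      have hGnn : 0 ≤ G y := by
        have : (0:ℝ) ≤ |y|^(α+δ) := Real.rpow_nonneg (abs_nonneg _) _
        have h2 : (0:ℝ) ≤ 2 ^ (α + δ/2) := Real.rpow_nonneg (by norm_num) _
        rw [hGdef]
        positivity
      have hG1 : 1 ≤ G y := by
        have h1 : (1:ℝ) ≤ 2 ^ (α + δ/2) :=
          Real.one_le_rpow one_le_two hβ0.le
        have h2 : (0:ℝ) ≤ |y|^(α+δ) := Real.rpow_nonneg (abs_nonneg _) _
        rw [hGdef]
        nlinarith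
      rw [Real.norm_eq_abs, abs_of_nonneg (div_nonneg (hf₁nn x y) hTx.le)]
      by_cases hyx : y ≤ x / x₀
      · rw [show f₁ x y = f x y from if_pos hyx]
        by_cases hy0 : 0 < y
        · rw [show f x y = T (x/y) from if_pos hy0]
          by_cases hy1 : 1 ≤ y
          · -- Potter case
            have hu : x₀ ≤ x / y := by
              rw [le_div_iff₀ hy0]
              rw [le_div_iff₀ hx₀pos] at hyx
              linarith [hyx]
            have hpz := hpotter (x/y) y hu hy1
            rw [div_mul_cancel₀ x hy0.ne'] at hpz
            have h2y : (0:ℝ) < 2*y := by linarith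
            have hb : T (x/y) / T x ≤ (2*y) ^ (α + δ/2) := by
              rw [div_le_iff₀ hTx]
              have hmul := mul_le_mul_of_nonneg_left hpz
                (Real.rpow_pos_of_pos h2y (α + δ/2)).le
              rw [← mul_assoc, ← Real.rpow_add h2y] at hmul
              simp only [add_neg_cancel, Real.rpow_zero, one_mul] at hmul
              linarith [hmul]
            refine le_trans hb ?_
            rw [Real.mul_rpow (by norm_num) hy0.le]
            have hyα : y ^ (α + δ/2) ≤ |y| ^ (α+δ) := by
              rw [abs_of_pos hy0]
              exact Real.rpow_le_rpow_of_exponent_le hy1 (by linarith)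
            have h2p : (0:ℝ) < 2 ^ (α + δ/2) := Real.rpow_pos_of_pos two_pos _
            rw [hGdef]
            nlinarith
          · -- 0 < y < 1 : the ratio is at most 1
            have hxy : x ≤ x / y := by
              rw [le_div_iff₀ hy0]
              nlinarith [not_le.mp hy1]
            have : T (x/y) ≤ T x := hTanti hxy
            have hr : T (x/y) / T x ≤ 1 := by
              rw [div_le_one hTx]; exact this
            linarith
        · rw [show f x y = 0 from if_neg hy0, zero_div]
          linarith
      · rw [show f₁ x y = 0 from if_neg hyx, zero_div]
        linarith
    · exact hGint
    · filter_upwards [hνae] with y hy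
      rcases lt_or_eq_of_le hy with hy0 | hy0
      · have hlim := hratio y⁻¹ (inv_pos.mpr hy0)
        have he : (y⁻¹ : ℝ) ^ (-α) = y ^ α := by
          rw [Real.inv_rpow hy0.le, Real.rpow_neg hy0.le, inv_inv]
        rw [he] at hlim
        rw [show φ y = y ^ α from if_pos hy0]
        apply hlim.congr'
        filter_upwards [eventually_ge_atTop (x₀ * y)] with x hx1
        have hyx : y ≤ x / x₀ := by
          rw [le_div_iff₀ hx₀pos]
          nlinarith [hx1]
        rw [show f₁ x y = f x y from if_pos hyx, show f x y = T (x/y) from if_pos hy0,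
          show y⁻¹ * x = x / y from by rw [div_eq_inv_mul]]
      · rw [← hy0]
        have : ∀ x : ℝ, f₁ x 0 = 0 := by
          intro x
          by_cases h : (0:ℝ) ≤ x / x₀
          · rw [show f₁ x 0 = f x 0 from if_pos h, show f x 0 = 0 from if_neg (lt_irrefl 0)]
          · exact if_neg (fun hc => h hc)
        simp only [this, zero_div]
        rw [show φ 0 = 0 from if_neg (lt_irrefl 0)]
        exact tendsto_const_nhds
  -- Part 2: the remainder tends to 0
  have hTx₀ : 0 < T x₀ := hTpos x₀ hx₀pos
  set C : ℝ := M * 2 ^ (α + δ/2) / T x₀ with hCdef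
  have hpart2 : Tendsto (fun x => (∫ y, f₂ x y ∂ν) / T x) atTop (nhds 0) := by
    have hbnd : Tendsto (fun x : ℝ => C * (x/x₀) ^ (-(δ/2))) atTop (nhds 0) := by
      have h1 : Tendsto (fun x : ℝ => x / x₀) atTop atTop :=
        Tendsto.atTop_div_const hx₀pos tendsto_id
      have h2 := (tendsto_rpow_neg_atTop (by linarith : 0 < δ/2)).comp h1
      have h3 := h2.const_mul C
      rw [mul_zero] at h3
      exact h3
    apply squeeze_zero' ?_ ?_ hbnd
    · filter_upwards [eventually_gt_atTop 0] with x hx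
      exact div_nonneg (integral_nonneg (hf₂nn x)) (hTnn x)
    · filter_upwards [eventually_ge_atTop x₀] with x hxx₀
      have hx0 : 0 < x := lt_of_lt_of_le hx₀pos hxx₀
      set s : ℝ := x / x₀ with hsdef
      have hs1 : 1 ≤ s := (one_le_div hx₀pos).mpr hxx₀
      have hs0 : 0 < s := lt_of_lt_of_le one_pos hs1
      -- Markov bound for the measure of {s < y}
      have hSmeas : MeasurableSet {y : ℝ | s < y} := measurableSet_Ioi
      have hindint : Integrable ({y : ℝ | s < y}.indicator fun _ => s ^ (α+δ)) ν :=
        (integrable_const _).indicator hSmeas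
      have hindint1 : Integrable ({y : ℝ | s < y}.indicator fun _ => (1:ℝ)) ν :=
        (integrable_const _).indicator hSmeas
      have hmarkov : (ν {y : ℝ | s < y}).toReal * s ^ (α+δ) ≤ M := by
        have hle : ∀ y, ({y : ℝ | s < y}.indicator fun _ => s ^ (α+δ)) y ≤ |y| ^ (α+δ) := by
          intro y
          by_cases h : y ∈ {y : ℝ | s < y}
          · rw [Set.indicator_of_mem h]
            have hsy : s ≤ |y| := by
              rw [abs_of_pos (lt_trans hs0 h)]; exact (le_of_lt h)
            exact Real.rpow_le_rpow hs0.le hsy (by linarith)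
          · rw [Set.indicator_of_notMem h]
            exact Real.rpow_nonneg (abs_nonneg _) _
        have := integral_mono hindint hmomν hle
        rwa [integral_indicator_const _ hSmeas, smul_eq_mul] at this
      have hνs : (ν {y : ℝ | s < y}).toReal ≤ M * s ^ (-(α+δ)) := by
        have hspos : (0:ℝ) < s ^ (α+δ) := Real.rpow_pos_of_pos hs0 _
        rw [Real.rpow_neg hs0.le, ← div_eq_mul_inv, le_div_iff₀ hspos]
        exact hmarkov
      -- bound the integral of f₂
      have hIf₂ : ∫ y, f₂ x y ∂ν ≤ M * s ^ (-(α+δ)) := by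
        refine le_trans (le_trans (integral_mono (hint₂ x) hindint1 ?_) ?_) hνs
        · intro y
          by_cases h : y ≤ x / x₀
          · rw [show f₂ x y = 0 from if_pos h]
            exact Set.indicator_nonneg (fun _ _ => zero_le_one) y
          · rw [show f₂ x y = f x y from if_neg h,
              Set.indicator_of_mem (show y ∈ {y : ℝ | s < y} from not_le.mp h)]
            exact hfle1 x y
        · rw [integral_indicator_const _ hSmeas, smul_eq_mul, mul_one]; exact le_rfl
      -- lower bound for T x
      have hTlow : (2*s) ^ (-(α + δ/2)) * T x₀ ≤ T x := by
        have := hpotter x₀ s le_rfl hs1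
        rwa [show x₀ * s = x from by rw [hsdef]; field_simp [hx₀pos.ne']] at this
      have hTxpos : 0 < T x := hTpos x hx0
      have hdenpos : (0:ℝ) < (2*s) ^ (-(α + δ/2)) * T x₀ :=
        mul_pos (Real.rpow_pos_of_pos (by linarith) _) hTx₀
      have hstep : (∫ y, f₂ x y ∂ν) / T x ≤
          (M * s ^ (-(α+δ))) / ((2*s) ^ (-(α + δ/2)) * T x₀) := by
        exact div_le_div₀ (mul_nonneg hM0 (Real.rpow_nonneg hs0.le _)) hIf₂ hdenpos hTlow
      refine le_trans hstep (le_of_eq ?_)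
      -- algebraic simplification
      have h2s : (0:ℝ) < 2*s := by linarith
      have ha : ((2*s) ^ (α + δ/2)) ≠ 0 := (Real.rpow_pos_of_pos h2s _).ne'
      have key : s ^ (-(α+δ)) * (2*s) ^ (α + δ/2) = 2 ^ (α + δ/2) * s ^ (-(δ/2)) := by
        rw [Real.mul_rpow (by norm_num) hs0.le, ← mul_assoc, mul_comm (s ^ (-(α+δ))),
          mul_assoc, ← Real.rpow_add hs0]
        congr 1
        ring_nf
      calc M * s ^ (-(α+δ)) / ((2*s) ^ (-(α + δ/2)) * T x₀)
          = M * (s ^ (-(α+δ)) * (2*s) ^ (α + δ/2)) / T x₀ := by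
            rw [Real.rpow_neg h2s.le]
            field_simp
        _ = C * s ^ (-(δ/2)) := by rw [key, hCdef]; ring
  -- main convergence
  have hmain : Tendsto (fun x => (P {ω | x < Y ω * X ω}).toReal / T x) atTop (nhds m) := by
    have hsum := hDCT.add hpart2
    rw [add_zero] at hsum
    apply hsum.congr'
    filter_upwards [eventually_gt_atTop 0] with x hx
    rw [hQeq x hx, hsplit x, add_div]
    congr 1
    exact integral_div _ _
  -- conclusion
  refine ⟨fun x => x ^ α * (P {ω | x < Y ω * X ω}).toReal, ?_, ?_⟩
  · intro c hc
    have hcm : Tendsto (fun x : ℝ => c * x) atTop atTop :=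
      Tendsto.const_mul_atTop hc tendsto_id
    have h2 : Tendsto (fun x =>
        ((P {ω | c*x < Y ω * X ω}).toReal / T (c*x)) /
        ((P {ω | x < Y ω * X ω}).toReal / T x)) atTop (nhds 1) := by
      have h := (hmain.comp hcm).div hmain hm0.ne'
      rw [div_self hm0.ne'] at h
      exact h
    have h3 := (hL c hc).mul h2
    rw [mul_one] at h3
    apply h3.congr'
    filter_upwards [eventually_gt_atTop 0] with x hx
    have hcx : 0 < c*x := mul_pos hc hx
    have e1 : ∀ z : ℝ, 0 < z → z ^ α * T z = L z := by
      intro z hz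
      rw [show T z = z ^ (-α) * L z from htail z hz, ← mul_assoc, ← Real.rpow_add hz]
      simp
    have hT1 : T (c*x) ≠ 0 := (hTpos _ hcx).ne'
    have hT2 : T x ≠ 0 := (hTpos _ hx).ne'
    have g1 : ∀ a b q : ℝ, b ≠ 0 → (a * b) * (q / b) = a * q := by
      intro a b q hb; field_simp
    rw [div_mul_div_comm, ← e1 _ hcx, ← e1 _ hx, g1 _ _ _ hT1, g1 _ _ _ hT2]
  · intro x hx
    rw [← mul_assoc, ← Real.rpow_add hx, neg_add_cancel, Real.rpow_zero, one_mul]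
end
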